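/- arXiv:1910.13360 — 4 statements merged into one kernel-verified Lean document; each statement's English description precedes it below -/
import Mathlib

section
/- Let A be an associative unital ring and let a, b, c, d ∈ A satisfy: ac = ca, dc = cd, c² = 0, and ad − da = bc + cb. Assume a and d are invertible and that d − c a⁻¹ b and d + b a⁻¹ c are invertible. Then the four elements a (d − c a⁻¹ b)⁻¹, (d + b a⁻¹ c)⁻¹ a, d⁻¹ (a − b d⁻¹ c), and (a + c d⁻¹ b) d⁻¹ are all equal. -/
/-- In an associative unital ring `A`, if `a, b, c, d` satisfy
`ac = ca`, `dc = cd`, `c² = 0`, `ad − da = bc + cb`, with `a`, `d`,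
`d − c a⁻¹ b` and `d + b a⁻¹ c` invertible, then the four Berezinian expressions
`a (d − c a⁻¹ b)⁻¹`, `(d + b a⁻¹ c)⁻¹ a`, `d⁻¹ (a − b d⁻¹ c)`, `(a + c d⁻¹ b) d⁻¹`
are all equal. -/
theorem stmt0 {A : Type*} [Ring A] (a b c d : A)
    (h1 : a * c = c * a) (h2 : d * c = c * d) (h3 : c * c = 0)
    (h4 : a * d - d * a = b * c + c * b)
    [Invertible a] [Invertible d]
    [Invertible (d - c * ⅟a * b)] [Invertible (d + b * ⅟a * c)] :
    a * ⅟(d - c * ⅟a * b) = ⅟(d + b * ⅟a * c) * a ∧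
    ⅟(d + b * ⅟a * c) * a = ⅟d * (a - b * ⅟d * c) ∧
    ⅟d * (a - b * ⅟d * c) = (a + c * ⅟d * b) * ⅟d := by
  have hca : Commute c a := h1.symm
  have hcd : Commute c d := h2.symm
  have hc1 : c * ⅟a = ⅟a * c := hca.invOf_right
  have hc2 : c * ⅟d = ⅟d * c := hcd.invOf_right
  have hcbc : c * b * c = c * (a * d) - c * (d * a) := by
    have h5 : c * (a * d - d * a) = c * (b * c + c * b) := by rw [h4]
    calc c * b * c = c * (b * c + c * b) - c * c * b := by noncomm_ring
      _ = c * (a * d - d * a) - 0 * b := by rw [h5, h3]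
      _ = c * (a * d) - c * (d * a) := by noncomm_ring
  have key1 : (d + b * ⅟a * c) * a = a * (d - c * ⅟a * b) := by
    have e1 : b * ⅟a * c * a = b * c := by
      rw [mul_assoc, ← h1, ← mul_assoc, mul_assoc b, invOf_mul_self, mul_one]
    have e2 : a * (c * ⅟a * b) = c * b := by
      rw [← mul_assoc, ← mul_assoc, h1, mul_assoc c, mul_invOf_self, mul_one]
    have h4' : a * d - c * b = d * a + b * c := by
      rw [sub_eq_iff_eq_add] at h4 ⊢
      rw [h4]; abel
    calc (d + b * ⅟a * c) * a = d * a + b * ⅟a * c * a := by noncomm_ring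
      _ = d * a + b * c := by rw [e1]
      _ = a * d - c * b := h4'.symm
      _ = a * d - a * (c * ⅟a * b) := by rw [e2]
      _ = a * (d - c * ⅟a * b) := by noncomm_ring
  have key3 : (a - b * ⅟d * c) * d = d * (a + c * ⅟d * b) := by
    have e1 : b * ⅟d * c * d = b * c := by
      rw [mul_assoc, ← h2, ← mul_assoc, mul_assoc b, invOf_mul_self, mul_one]
    have e2 : d * (c * ⅟d * b) = c * b := by
      rw [← mul_assoc, ← mul_assoc, h2, mul_assoc c, mul_invOf_self, mul_one]
    have h4' : a * d - b * c = d * a + c * b := by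
      rw [sub_eq_iff_eq_add] at h4 ⊢
      rw [h4]; abel
    calc (a - b * ⅟d * c) * d = a * d - b * ⅟d * c * d := by noncomm_ring
      _ = a * d - b * c := by rw [e1]
      _ = d * a + c * b := h4'
      _ = d * a + d * (c * ⅟d * b) := by rw [e2]
      _ = d * (a + c * ⅟d * b) := by noncomm_ring
  have key2 : (d + b * ⅟a * c) * (⅟d * (a - b * ⅟d * c)) = a := by
    have t1 : d * (⅟d * (a - b * ⅟d * c)) = a - b * ⅟d * c := mul_invOf_cancel_left _ _
    have t2 : c * ⅟d * (b * ⅟d * c) = ⅟d * (c * b * c) * ⅟d := by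
      calc c * ⅟d * (b * ⅟d * c)
          = ⅟d * c * (b * ⅟d * c) := by rw [hc2]
        _ = ⅟d * (c * b * (⅟d * c)) := by noncomm_ring
        _ = ⅟d * (c * b * (c * ⅟d)) := by rw [hc2]
        _ = ⅟d * (c * b * c) * ⅟d := by noncomm_ring
    have t3 : ⅟d * (c * b * c) * ⅟d = ⅟d * c * a - c * a * ⅟d := by
      have u1 : ⅟d * (c * (a * d)) * ⅟d = ⅟d * c * a := by
        rw [show c * (a * d) = c * a * d by noncomm_ring, ← mul_assoc,
          mul_assoc (⅟d * (c * a)), mul_invOf_self, mul_one, mul_assoc]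
      have u2 : ⅟d * (c * (d * a)) * ⅟d = c * a * ⅟d := by
        rw [show c * (d * a) = c * d * a by noncomm_ring, ← h2, ← mul_assoc,
          ← mul_assoc, invOf_mul_self, one_mul]
      rw [hcbc, mul_sub, sub_mul, u1, u2]
    have t4 : c * ⅟d * (a - b * ⅟d * c) = c * a * ⅟d := by
      calc c * ⅟d * (a - b * ⅟d * c)
          = c * ⅟d * a - c * ⅟d * (b * ⅟d * c) := by noncomm_ring
        _ = ⅟d * c * a - (⅟d * c * a - c * a * ⅟d) := by rw [t2, t3, hc2]
        _ = c * a * ⅟d := sub_sub_cancel _ _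
    have e3 : b * ⅟a * (c * a * ⅟d) = b * c * ⅟d := by
      calc b * ⅟a * (c * a * ⅟d) = b * (⅟a * (c * a)) * ⅟d := by noncomm_ring
        _ = b * (⅟a * (a * c)) * ⅟d := by rw [h1]
        _ = b * c * ⅟d := by rw [invOf_mul_cancel_left]
    have e4 : b * ⅟d * c = b * c * ⅟d := by
      rw [mul_assoc, ← hc2, ← mul_assoc]
    calc (d + b * ⅟a * c) * (⅟d * (a - b * ⅟d * c))
        = d * (⅟d * (a - b * ⅟d * c)) + b * ⅟a * (c * ⅟d * (a - b * ⅟d * c)) := by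
          noncomm_ring
      _ = (a - b * ⅟d * c) + b * ⅟a * (c * a * ⅟d) := by rw [t1, t4]
      _ = (a - b * c * ⅟d) + b * c * ⅟d := by rw [e3, e4]
      _ = a := by abel
  refine ⟨?_, ?_, ?_⟩
  · calc a * ⅟(d - c * ⅟a * b)
        = ⅟(d + b * ⅟a * c) * ((d + b * ⅟a * c) * a) * ⅟(d - c * ⅟a * b) := by
          rw [← mul_assoc, invOf_mul_self, one_mul]
      _ = ⅟(d + b * ⅟a * c) * (a * (d - c * ⅟a * b)) * ⅟(d - c * ⅟a * b) := by rw [key1]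
      _ = ⅟(d + b * ⅟a * c) * a := by
          rw [mul_assoc, mul_assoc a, mul_invOf_self, mul_one]
  · calc ⅟(d + b * ⅟a * c) * a
        = ⅟(d + b * ⅟a * c) * ((d + b * ⅟a * c) * (⅟d * (a - b * ⅟d * c))) := by rw [key2]
      _ = ⅟d * (a - b * ⅟d * c) := invOf_mul_cancel_left _ _
  · calc ⅟d * (a - b * ⅟d * c)
        = ⅟d * ((a - b * ⅟d * c) * d * ⅟d) := by
          rw [mul_assoc (a - b * ⅟d * c), mul_invOf_self, mul_one]
      _ = ⅟d * (d * (a + c * ⅟d * b) * ⅟d) := by rw [key3]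
      _ = (a + c * ⅟d * b) * ⅟d := by rw [mul_assoc d, invOf_mul_cancel_left]
end

section
/- Let k ≥ 1, let q₁, q₂ ∈ ℂ be nonzero, and let λ^{(s)} = (λ₁^{(s)}, λ₂^{(s)}) ∈ ℂ² for s = 1, …, k. Assume either q₁ ≠ q₂, or q₁ = q₂ and Σ_{s=1}^k (λ₁^{(s)} + λ₂^{(s)}) ≠ 0. Then there exists b = (b₁, …, b_k) ∈ ℂ^k such that the polynomial q₁∏_{s=1}^k (x − b_s + λ₁^{(s)}) − q₂∏_{s=1}^k (x − b_s − λ₂^{(s)}) ∈ ℂ[x] is nonzero and has no repeated complex roots (it is squarefree). -/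
open Polynomial

lemma lemA (G B : ℂ[X]) (hG : Squarefree G) :
    ∃ u : ℂ, Squarefree ((X - C u) * G - B) := by
  have hG0 : G ≠ 0 := hG.ne_zero
  have hcop : IsCoprime G (derivative G) := PerfectField.separable_iff_squarefree.mpr hG
  set Q : ℂ[X] := G ^ 2 + B * derivative G - derivative B * G with hQdef
  by_cases hQ : Q = 0
  · -- degenerate case : B = G * (X + C d)
    have hdvd : G ∣ B * derivative G := by
      have h1 : B * derivative G = derivative B * G - G ^ 2 := by
        have := hQ; rw [hQdef] at this; linear_combination this
      rw [h1]
      exact dvd_sub (Dvd.intro_left _ rfl) (dvd_pow_self G two_ne_zero)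
    obtain ⟨S, hS⟩ := hcop.dvd_of_dvd_mul_right hdvd
    have hS1 : derivative S = 1 := by
      have h2 : G ^ 2 * (1 - derivative S) = 0 := by
        have := hQ
        rw [hQdef, hS, derivative_mul] at this
        linear_combination this
      rcases mul_eq_zero.mp h2 with h | h
      · exact absurd (pow_eq_zero_iff two_ne_zero |>.mp h) hG0
      · linear_combination -h
    have h3 : derivative (S - X) = 0 := by simp [hS1]
    obtain ⟨d, hd⟩ : ∃ d, S - X = C d := by
      have := natDegree_eq_zero_of_derivative_eq_zero h3
      exact ⟨_, (Polynomial.eq_C_of_natDegree_eq_zero this)⟩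
    have hSX : S = X + C d := by linear_combination hd
    refine ⟨-d - 1, ?_⟩
    have hEq : (X - C (-d - 1)) * G - B = G := by
      rw [hS, hSX]
      simp only [map_sub, map_neg, map_one]
      ring
    rwa [hEq]
  · -- generic case: finite bad set
    set f1 : ℂ → ℂ := fun z => z - B.eval z / G.eval z with hf1
    set f2 : ℂ → ℂ := fun z => z - (derivative B).eval z / (derivative G).eval z with hf2
    set bad : Set ℂ := {u | ¬ Squarefree ((X - C u) * G - B)} with hbad
    have hfin : Set.Finite ({u : ℂ | (X - C u) * G - B = 0} ∪
        (f1 '' {z | Q.IsRoot z} ∪ f2 '' {z | G.IsRoot z})) := by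
      refine Set.Finite.union ?_ (Set.Finite.union ?_ ?_)
      · refine Set.Subsingleton.finite ?_
        intro a ha b hb
        simp only [Set.mem_setOf_eq] at ha hb
        have h4 : (C b - C a) * G = 0 := by linear_combination ha - hb
        rcases mul_eq_zero.mp h4 with h | h
        · have := sub_eq_zero.mp h
          exact (C_injective (this)).symm
        · exact absurd h hG0
      · exact ((finite_setOf_isRoot hQ).image _)
      · exact ((finite_setOf_isRoot hG0).image _)
    have hsub : bad ⊆ ({u : ℂ | (X - C u) * G - B = 0} ∪
        (f1 '' {z | Q.IsRoot z} ∪ f2 '' {z | G.IsRoot z})) := ?_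
    · obtain ⟨u, hu⟩ := ((hfin.subset hsub).infinite_compl).nonempty
      exact ⟨u, not_not.mp fun hc => hu hc⟩
    intro u hu
    rw [hbad, Set.mem_setOf_eq] at hu
    by_cases hP0 : (X - C u) * G - B = 0
    · exact Or.inl hP0
    right
    have hu' : ∃ x : ℂ[X], x * x ∣ (X - C u) * G - B ∧ ¬ IsUnit x := by
      rw [Squarefree] at hu; push_neg at hu; exact hu
    obtain ⟨x, hxx, hxu⟩ := hu'
    have hx0 : x ≠ 0 := by
      rintro rfl
      rw [zero_mul] at hxx
      exact hP0 (zero_dvd_iff.mp hxx)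
    have hdeg : 0 < degree x := by
      rcases lt_or_eq_of_le (zero_le_degree_iff.mpr hx0) with h | h
      · exact h
      · exact absurd (isUnit_iff_degree_eq_zero.mpr h.symm) hxu
    obtain ⟨z, hz⟩ := Complex.exists_root hdeg
    obtain ⟨R, hR⟩ : (X - C z) * (X - C z) ∣ (X - C u) * G - B :=
      dvd_trans (mul_dvd_mul (dvd_iff_isRoot.mpr hz) (dvd_iff_isRoot.mpr hz)) hxx
    have hPz1 : (z - u) * G.eval z - B.eval z = 0 := by
      have : ((X - C u) * G - B).eval z = 0 := by rw [hR]; simp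
      simpa using this
    have hPz2 : G.eval z + (z - u) * (derivative G).eval z - (derivative B).eval z = 0 := by
      have h5 : (derivative ((X - C u) * G - B)).eval z = 0 := by
        rw [hR, derivative_mul, derivative_mul]
        simp
      simp only [derivative_sub, derivative_mul, derivative_X, derivative_C, eval_sub, eval_mul,
        eval_add, eval_X, eval_C, sub_zero, one_mul] at h5
      linear_combination h5
    by_cases hGz : G.eval z = 0
    · right
      have hG'z : (derivative G).eval z ≠ 0 := by
        intro h0
        obtain ⟨a, b, hab⟩ := hcop
        have := congrArg (eval z) hab
        simp [hGz, h0] at this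
      refine ⟨z, hGz, ?_⟩
      show z - (derivative B).eval z / (derivative G).eval z = u
      have hB' : (derivative B).eval z = (z - u) * (derivative G).eval z := by
        linear_combination -hPz2 + hGz
      rw [hB', mul_div_assoc, div_self hG'z, mul_one]
      ring
    · left
      refine ⟨z, ?_, ?_⟩
      · show Q.eval z = 0
        rw [hQdef]
        simp only [eval_add, eval_sub, eval_mul, eval_pow]
        have hB : B.eval z = (z - u) * G.eval z := by linear_combination -hPz1
        rw [hB]
        linear_combination G.eval z * hPz2
      · show z - B.eval z / G.eval z = u
        have hB : B.eval z = (z - u) * G.eval z := by linear_combination -hPz1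
        rw [hB, mul_div_assoc, div_self hGz, mul_one]
        ring


lemma lemL (q1 q2 : ℂ) (hq2 : q2 ≠ 0) :
    ∀ (k : ℕ) (μ : Fin k → ℂ), (q1 ≠ q2 ∨ ∃ h : 0 < k, μ ⟨0, h⟩ ≠ 0) →
    ∃ u : Fin k → ℂ,
      Squarefree (C q1 * ∏ s, (X - C (u s)) - C q2 * ∏ s, (X - C (u s + μ s))) := by
  intro k
  induction k with
  | zero =>
    intro μ h
    refine ⟨fun _ => 0, ?_⟩
    have hq : q1 ≠ q2 := by
      rcases h with h | ⟨h, _⟩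
      · exact h
      · exact absurd h (lt_irrefl 0)
    rw [Fin.prod_univ_zero, Fin.prod_univ_zero, mul_one, mul_one, ← C_sub]
    exact (isUnit_C.mpr (isUnit_iff_ne_zero.mpr (sub_ne_zero.mpr hq))).squarefree
  | succ k ih =>
    intro μ h
    by_cases hbase : q1 = q2 ∧ k = 0
    · obtain ⟨hq, hk⟩ := hbase
      subst hq hk
      have hμ : μ ⟨0, Nat.zero_lt_one⟩ ≠ 0 := by
        rcases h with h | ⟨_, h⟩
        · exact absurd rfl h
        · exact h
      refine ⟨fun _ => 0, ?_⟩
      have e : C q1 * ∏ s : Fin 1, (X - C ((0:ℂ))) - C q1 * ∏ s : Fin 1, (X - C ((0:ℂ) + μ s)) =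
          C (q1 * μ ⟨0, Nat.zero_lt_one⟩) := by
        rw [Fin.prod_univ_one, Fin.prod_univ_one]
        simp only [zero_add, C_mul, C_0]
        ring_nf
        rfl
      rw [e]
      exact (isUnit_C.mpr (isUnit_iff_ne_zero.mpr (mul_ne_zero hq2 hμ))).squarefree
    · have hih : q1 ≠ q2 ∨ ∃ h : 0 < k, (fun s : Fin k => μ s.castSucc) ⟨0, h⟩ ≠ 0 := by
        rcases h with h | ⟨hpos, h⟩
        · exact Or.inl h
        · by_cases hq : q1 = q2
          · have hk : k ≠ 0 := fun h0 => hbase ⟨hq, h0⟩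
            exact Or.inr ⟨Nat.pos_of_ne_zero hk, h⟩
          · exact Or.inl hq
      obtain ⟨u', hu'⟩ := ih (fun s => μ s.castSucc) hih
      obtain ⟨u0, hu0⟩ := lemA
        (C q1 * ∏ s : Fin k, (X - C (u' s)) - C q2 * ∏ s : Fin k, (X - C (u' s + μ s.castSucc)))
        (-(C q2 * C (μ (Fin.last k)) * ∏ s : Fin k, (X - C (u' s + μ s.castSucc)))) hu'
      refine ⟨Fin.snoc u' u0, ?_⟩
      have e1 : (∏ s : Fin (k+1), (X - C ((Fin.snoc u' u0 : Fin (k+1) → ℂ) s))) =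
          (∏ s : Fin k, (X - C (u' s))) * (X - C u0) := by
        rw [Fin.prod_univ_castSucc]
        simp
      have e2 : (∏ s : Fin (k+1), (X - C (((Fin.snoc u' u0 : Fin (k+1) → ℂ) s) + μ s))) =
          (∏ s : Fin k, (X - C (u' s + μ s.castSucc))) * (X - C (u0 + μ (Fin.last k))) := by
        rw [Fin.prod_univ_castSucc]
        simp
      rw [e1, e2, C_add]
      convert hu0 using 1
      ring

lemma lemL' (q1 q2 : ℂ) (hq2 : q2 ≠ 0) (k : ℕ) (μ : Fin k → ℂ)
    (h : q1 ≠ q2 ∨ ∃ i : Fin k, μ i ≠ 0) :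
    ∃ u : Fin k → ℂ,
      Squarefree (C q1 * ∏ s, (X - C (u s)) - C q2 * ∏ s, (X - C (u s + μ s))) := by
  rcases h with hq | ⟨i, hi⟩
  · exact lemL q1 q2 hq2 k μ (Or.inl hq)
  · have hpos : 0 < k := i.pos
    obtain ⟨u', hu'⟩ := lemL q1 q2 hq2 k (fun s => μ (Equiv.swap ⟨0, hpos⟩ i s))
      (Or.inr ⟨hpos, by simpa using hi⟩)
    refine ⟨fun s => u' (Equiv.swap ⟨0, hpos⟩ i s), ?_⟩
    have h1 : (∏ s, (X - C (u' (Equiv.swap ⟨0, hpos⟩ i s)))) = ∏ s, (X - C (u' s)) :=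
      Equiv.prod_comp (Equiv.swap ⟨0, hpos⟩ i) (fun t => X - C (u' t))
    have h2 : (∏ s, (X - C (u' (Equiv.swap ⟨0, hpos⟩ i s) + μ s))) =
        ∏ s, (X - C (u' s + μ (Equiv.swap ⟨0, hpos⟩ i s))) := by
      calc (∏ s, (X - C (u' (Equiv.swap ⟨0, hpos⟩ i s) + μ s)))
          = ∏ s, (X - C (u' (Equiv.swap ⟨0, hpos⟩ i s)
              + μ (Equiv.swap ⟨0, hpos⟩ i (Equiv.swap ⟨0, hpos⟩ i s)))) :=
            Finset.prod_congr rfl fun s _ => by rw [Equiv.swap_apply_self]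
        _ = ∏ s, (X - C (u' s + μ (Equiv.swap ⟨0, hpos⟩ i s))) :=
            Equiv.prod_comp (Equiv.swap ⟨0, hpos⟩ i)
              (fun t => X - C (u' t + μ (Equiv.swap ⟨0, hpos⟩ i t)))
    rw [h1, h2]
    exact hu'

/-- For `k ≥ 1`, nonzero `q₁, q₂ ∈ ℂ` and weights `λ^{(s)} = (λ₁^{(s)}, λ₂^{(s)})`,
assuming either `q₁ ≠ q₂` or (`q₁ = q₂` and `Σ_s (λ₁^{(s)} + λ₂^{(s)}) ≠ 0`), there exists
`b ∈ ℂ^k` such that `q₁ ∏_s (x − b_s + λ₁^{(s)}) − q₂ ∏_s (x − b_s − λ₂^{(s)})` is a nonzero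
squarefree polynomial. -/
theorem stmt4 (k : ℕ) (hk : 1 ≤ k) (q1 q2 : ℂ) (hq1 : q1 ≠ 0) (hq2 : q2 ≠ 0)
    (lam1 lam2 : Fin k → ℂ)
    (h : q1 ≠ q2 ∨ (q1 = q2 ∧ ∑ s, (lam1 s + lam2 s) ≠ 0)) :
    ∃ b : Fin k → ℂ,
      (C q1 * ∏ s, (X - C (b s - lam1 s)) - C q2 * ∏ s, (X - C (b s + lam2 s))) ≠ 0 ∧
      Squarefree (C q1 * ∏ s, (X - C (b s - lam1 s)) - C q2 * ∏ s, (X - C (b s + lam2 s))) := by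
  have hμ : q1 ≠ q2 ∨ ∃ i : Fin k, (lam1 i + lam2 i) ≠ 0 := by
    rcases h with hq | ⟨hq, hsum⟩
    · exact Or.inl hq
    · right
      by_contra hc
      push_neg at hc
      exact hsum (Finset.sum_eq_zero fun s _ => hc s)
  obtain ⟨u, hu⟩ := lemL' q1 q2 hq2 k (fun s => lam1 s + lam2 s) hμ
  have e : (C q1 * ∏ s, (X - C ((u s + lam1 s) - lam1 s))
        - C q2 * ∏ s, (X - C ((u s + lam1 s) + lam2 s)))
      = C q1 * ∏ s, (X - C (u s)) - C q2 * ∏ s, (X - C (u s + (lam1 s + lam2 s))) := by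
    congr 1
    · congr 1
      exact Finset.prod_congr rfl fun s _ => by rw [add_sub_cancel_right]
    · congr 1
      exact Finset.prod_congr rfl fun s _ => by rw [add_assoc]
  exact ⟨fun s => u s + lam1 s, by rw [e]; exact hu.ne_zero, by rw [e]; exact hu⟩
end

section
/- Let 0 ≤ ℓ ≤ n. Then (𝒱^S)_{(n−ℓ,ℓ)} is a free module over ℂ[z₁, …, z_n]^{S_n} of rank equal to the binomial coefficient C(n,ℓ); consequently 𝒱^S is a free ℂ[z₁, …, z_n]^{S_n}-module of rank 2^n. -/
set_option synthInstance.maxHeartbeats 1000000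
set_option maxHeartbeats 1000000

noncomputable section

open MvPolynomial

/-- The ring `ℂ[z₁, …, z_n]`. -/
abbrev MvP (n : ℕ) := MvPolynomial (Fin n) ℂ

/-- `𝒱 = V ⊗ ℂ[z₁, …, z_n]` where `V = (ℂ^{1|1})^{⊗n}`, realized as the space of
`ℂ[z₁, …, z_n]`-valued functions on the index set `{1,2}^n` of the basis `v_I`
(we encode `1 ↦ 0` (even), `2 ↦ 1` (odd)). -/
abbrev Vsp (n : ℕ) := (Fin n → Fin 2) → MvP n

/-- Number of entries of `I` equal to `2` (i.e. to `1` in our `Fin 2` encoding). -/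
def cnt {n : ℕ} (J : Fin n → Fin 2) : ℕ := (Finset.univ.filter fun s => J s = 1).card

/-- Membership in the weight subspace `(𝒱)_{(n−ℓ,ℓ)}`. -/
def memWt (n ℓ : ℕ) (f : Vsp n) : Prop := ∀ J, cnt J ≠ ℓ → f J = 0

/-- The Koszul sign of the graded flip `P^{(i,j)}` at the index `J`. -/
def epsV {n : ℕ} (i j : Fin n) (J : Fin n → Fin 2) : MvP n :=
  if J i = 1 ∧ J j = 1 then -1 else 1

/-- Invariance of `f ∈ 𝒱` under the standard `S_n`-action: for every simple transposition
`s_i` (of positions `i` and `j = i+1`), `f = P^{(i,i+1)} f^{s_i}`, written out in theatomic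
coordinates. -/
def stdInv (n : ℕ) (f : Vsp n) : Prop :=
  ∀ i j : Fin n, (j : ℕ) = (i : ℕ) + 1 → ∀ J,
    f J = epsV i j J * (rename (Equiv.swap i j) (f (J ∘ Equiv.swap i j)))

/-- Invariance of `f ∈ 𝒱` under the modified `S_n`-action: for every simple transposition,
`(z_i − z_{i+1})·(f − P^{(i,i+1)} f^{s_i}) = f − f^{s_i}`, which is the (denominator-cleared)
fixed-point equation `f = ŝ_i f` for
`ŝ_i f = P^{(i,i+1)} f^{s_i} + (f − f^{s_i})/(z_i − z_{i+1})`. -/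
def modInv (n : ℕ) (f : Vsp n) : Prop :=
  ∀ i j : Fin n, (j : ℕ) = (i : ℕ) + 1 → ∀ J,
    (X i - X j) * (f J - epsV i j J * (rename (Equiv.swap i j) (f (J ∘ Equiv.swap i j))))
      = f J - rename (Equiv.swap i j) (f J)

/-- The operator `e_{ij}[r]` on `𝒱`: in the basis coordinates,
`(e f) J = Σ_s [J s = i] · sign · z_s^r · f (update J s j)`, where `sign = (−1)^{#{t<s : J t = 2}}`
for `i ≠ j` and `1` otherwise.  Here the first index is the target state and the second the
source state, so `e₂₁[r] = ee n 1 0 r` and `e₁₂[r] = ee n 0 1 r`. -/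
def ee (n : ℕ) (i j : Fin 2) (r : ℕ) : Vsp n →ₗ[ℂ] Vsp n where
  toFun f := fun J => ∑ s : Fin n,
    if J s = i then
      (if i = j then 1
        else (-1 : MvP n) ^ (Finset.univ.filter fun t : Fin n => t < s ∧ J t = 1).card)
        * (X s) ^ r * f (Function.update J s j)
    else 0
  map_add' f g := by
    funext J
    simp only [Pi.add_apply]
    rw [← Finset.sum_add_distrib]
    refine Finset.sum_congr rfl fun s _ => ?_
    by_cases h : J s = i <;> simp [h, mul_add]
  map_smul' c f := by
    funext J
    simp only [RingHom.id_apply, Pi.smul_apply]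
    rw [Finset.smul_sum]
    refine Finset.sum_congr rfl fun s _ => ?_
    by_cases h : J s = i <;> simp [h, mul_smul_comm]

/-- The vector `v⁺ = v₁ ⊗ ⋯ ⊗ v₁ ⊗ 1`. -/
def vplus (n : ℕ) : Vsp n := fun J => if J = fun _ => 0 then 1 else 0


/-!
For `f ∈ 𝒱` and `T ⊆ {1,…,n}` write `f_T` for the coordinate of `f` at the basis vector with
entries `2` exactly at `T`. The candidate basis of the weight-`ℓ` part consists of the vectors
`w_S`, `|S| = ℓ`, with `(w_S)_T = det (z_t ^ s)_{t ∈ T, s ∈ S}`, the `ℓ × ℓ` minors of the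
Vandermonde matrix `V`. The generalized Laplace expansion says that the compound matrix
`C = (det V[T,S])_{T,S}` satisfies `C C' = Δ • 1`, where `C'` collects the signed complementary
minors and `Δ = det V`. This gives independence (`det C ≠ 0`). For spanning, invariance of `f`
makes every entry of `C' (f_T)_T` alternating under adjacent transpositions, hence `Δ` times a
symmetric polynomial `c_S`, and then `C c = (f_T)_T`. Summing over the weights gives a basis of
`𝒱^S` with `∑ₗ C(n,ℓ) = 2ⁿ` elements.
-/

open Equiv Matrix

theorem Int.cast_units_mul_self {R : Type*} [Ring R] (u : ℤˣ) : ((u : ℤ) : R) * (u : ℤ) = 1 := by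
  rw [← Int.cast_mul, Int.units_coe_mul_self, Int.cast_one]

theorem Equiv.Perm.induction_on_adjacent_swaps {n : ℕ} {P : Perm (Fin n) → Prop} (one : P 1)
    (mul : ∀ σ τ, P σ → P τ → P (σ * τ))
    (adjacent : ∀ i j : Fin n, (j : ℕ) = i + 1 → P (swap i j)) (σ : Perm (Fin n)) : P σ := by
  cases n with
  | zero => exact Subsingleton.elim 1 σ ▸ one
  | succ m =>
    have hσ : σ ∈ Submonoid.closure (Set.range fun i : Fin m => swap i.castSucc i.succ) := by
      rw [Perm.mclosure_swap_castSucc_succ]; trivial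
    induction hσ using Submonoid.closure_induction with
    | mem _ h => obtain ⟨i, rfl⟩ := h; exact adjacent _ _ (by simp)
    | one => exact one
    | mul σ τ _ _ hσ hτ => exact mul σ τ hσ hτ

theorem Fin.swap_lt_swap_of_adjacent {n : ℕ} {i j a b : Fin n} (hij : (j : ℕ) = i + 1)
    (hab : a < b) (hne : ¬(a = i ∧ b = j)) : swap i j a < swap i j b := by
  rw [Fin.lt_def] at hab ⊢
  simp only [swap_apply_def]
  split_ifs <;> simp only [Fin.ext_iff] at * <;> omega

/-! ### Alternating polynomials and the Vandermonde determinant -/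

section Alternating

variable {R : Type*} [CommRing R] {n : ℕ}

theorem rename_eq_sign_mul_of_adjacent {p : MvPolynomial (Fin n) R}
    (hp : ∀ i j : Fin n, (j : ℕ) = i + 1 → rename (swap i j) p = -p) (σ : Perm (Fin n)) :
    rename σ p = (Perm.sign σ : ℤ) * p := by
  induction σ using Perm.induction_on_adjacent_swaps with
  | one => simp
  | mul σ τ hσ hτ =>
    rw [Perm.coe_mul, ← rename_rename, hτ, map_mul, map_intCast, hσ, Perm.sign_mul]
    push_cast; ring
  | adjacent i j hij =>
    rw [hp i j hij, Perm.sign_swap (Fin.ne_of_val_ne (by omega))]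
    simp

theorem isSymmetric_of_adjacent {p : MvPolynomial (Fin n) R}
    (hp : ∀ i j : Fin n, (j : ℕ) = i + 1 → rename (swap i j) p = p) : p.IsSymmetric := by
  intro σ
  induction σ using Perm.induction_on_adjacent_swaps with
  | one => simp
  | mul σ τ hσ hτ => rw [Perm.coe_mul, ← rename_rename, hτ, hσ]
  | adjacent i j hij => exact hp i j hij

end Alternating

section ReplaceVar

variable {R σ : Type*} [CommRing R] [DecidableEq σ]

def replaceVar (i j : σ) : MvPolynomial σ R →ₐ[R] MvPolynomial σ R :=
  aeval (Function.update X j (X i))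

theorem replaceVar_X (i j s : σ) :
    replaceVar (R := R) i j (X s) = if s = j then X i else X s := by
  rw [replaceVar, aeval_X, Function.update_apply]

theorem X_sub_X_dvd_sub_replaceVar (i j : σ) (p : MvPolynomial σ R) :
    X j - X i ∣ p - replaceVar i j p := by
  induction p using MvPolynomial.induction_on with
  | C a => simp
  | add p q hp hq => simpa only [map_add, add_sub_add_comm] using dvd_add hp hq
  | mul_X p s hp =>
    rw [map_mul, show p * X s - replaceVar i j p * replaceVar i j (X s)
      = (p - replaceVar i j p) * X s + replaceVar i j p * (X s - replaceVar i j (X s)) by ring]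
    refine dvd_add (hp.mul_right _) (Dvd.dvd.mul_left ?_ _)
    rw [replaceVar_X]
    split_ifs with h
    · rw [h]
    · simp

theorem X_sub_X_dvd_iff {i j : σ} (hij : i ≠ j) {p : MvPolynomial σ R} :
    X j - X i ∣ p ↔ replaceVar i j p = 0 := by
  constructor
  · rintro ⟨q, rfl⟩
    simp [replaceVar_X, hij]
  · intro h
    simpa [h] using X_sub_X_dvd_sub_replaceVar i j p

theorem prime_X_sub_X [IsDomain R] {i j : σ} (hij : i ≠ j) :
    Prime (X j - X i : MvPolynomial σ R) := by
  refine ⟨sub_ne_zero.mpr fun h => hij (X_injective h).symm, fun hu => ?_, fun a b hab => ?_⟩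
  · have h0 : replaceVar i j (X j - X i : MvPolynomial σ R) = 0 := (X_sub_X_dvd_iff hij).mp dvd_rfl
    exact not_isUnit_zero (h0 ▸ hu.map (replaceVar i j))
  · simpa only [X_sub_X_dvd_iff hij, map_mul, mul_eq_zero] using hab

theorem replaceVar_eq_zero_of_rename_swap [IsDomain R] [CharZero R] {i j : σ} (hij : i ≠ j)
    {p : MvPolynomial σ R} (hp : rename (swap i j) p = -p) : replaceVar i j p = 0 := by
  have hcomp : (Function.update X j (X i) : σ → MvPolynomial σ R) ∘ swap i j
      = Function.update X j (X i) := by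
    funext s
    simp only [Function.comp_apply, Function.update_apply, swap_apply_def]
    split_ifs <;> simp_all
  have h : replaceVar i j p = -replaceVar i j p := by
    rw [← map_neg, ← hp, replaceVar, aeval_rename, hcomp]
  exact CharZero.eq_neg_self_iff.mp h

end ReplaceVar

section Vandermonde

variable {R : Type*} [CommRing R] {n k : ℕ}

theorem X_sub_X_not_dvd [Nontrivial R] {i j a b : Fin n} (hij : i < j) (hab : a < b)
    (hne : (i, j) ≠ (a, b)) : ¬ (X j - X i : MvPolynomial (Fin n) R) ∣ X b - X a := by
  rw [X_sub_X_dvd_iff hij.ne, map_sub, replaceVar_X, replaceVar_X, sub_eq_zero]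
  split_ifs with h1 h2 h2 <;> intro h <;> have := X_injective h <;> subst_vars <;>
    simp_all [lt_asymm]

theorem rename_det_submatrix_vandermonde (σ : Perm (Fin n)) (r c : Fin k → Fin n) :
    rename σ ((vandermonde (X : Fin n → MvPolynomial (Fin n) R)).submatrix r c).det
      = ((vandermonde X).submatrix (σ ∘ r) c).det := by
  rw [← AlgHom.coe_toRingHom, RingHom.map_det]
  congr 1
  ext p q
  simp [vandermonde_apply, rename_X]

theorem rename_det_vandermonde (σ : Perm (Fin n)) :
    rename σ (vandermonde (X : Fin n → MvPolynomial (Fin n) R)).det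
      = ((Perm.sign σ : ℤ) : MvPolynomial (Fin n) R) * (vandermonde X).det := by
  simpa only [submatrix_id_id, Function.comp_id, det_permute] using
    rename_det_submatrix_vandermonde (R := R) σ id id

theorem det_vandermonde_X_ne_zero [IsDomain R] :
    (vandermonde (X : Fin n → MvPolynomial (Fin n) R)).det ≠ 0 :=
  det_vandermonde_ne_zero_iff.mpr X_injective

variable [IsDomain R] [UniqueFactorizationMonoid R] [CharZero R]

theorem det_vandermonde_dvd_of_adjacent {p : MvPolynomial (Fin n) R}
    (hp : ∀ i j : Fin n, (j : ℕ) = i + 1 → rename (swap i j) p = -p) :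
    (vandermonde (X : Fin n → MvPolynomial (Fin n) R)).det ∣ p := by
  have hswap (i j : Fin n) (hij : i ≠ j) : rename (swap i j) p = -p := by
    rw [rename_eq_sign_mul_of_adjacent hp, Perm.sign_swap hij]
    simp
  rw [det_vandermonde, ← Finset.prod_sigma Finset.univ Finset.Ioi fun x => X x.2 - X x.1]
  refine Finset.prod_dvd_of_isRelPrime (fun x hx y hy hxy => ?_) fun x hx => ?_
  · simp only [Finset.coe_sigma, Set.mem_sigma_iff, Finset.coe_Ioi, Set.mem_Ioi] at hx hy
    refine ((prime_X_sub_X hx.2.ne).irreducible.isRelPrime_iff_not_dvd).mpr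
      (X_sub_X_not_dvd hx.2 hy.2 fun h => hxy ?_)
    obtain ⟨⟩ := x; obtain ⟨⟩ := y
    simp_all
  · simp only [Finset.mem_sigma, Finset.mem_Ioi] at hx
    exact (X_sub_X_dvd_iff hx.2.ne).mpr
      (replaceVar_eq_zero_of_rename_swap hx.2.ne (hswap _ _ hx.2.ne))

theorem exists_isSymmetric_eq_mul_det_vandermonde {p : MvPolynomial (Fin n) R}
    (hp : ∀ i j : Fin n, (j : ℕ) = i + 1 → rename (swap i j) p = -p) :
    ∃ q : MvPolynomial (Fin n) R, q.IsSymmetric ∧ p = q * (vandermonde X).det := by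
  obtain ⟨q, rfl⟩ := det_vandermonde_dvd_of_adjacent hp
  refine ⟨q, isSymmetric_of_adjacent fun i j hij => ?_, mul_comm _ _⟩
  have h := hp i j hij
  rw [map_mul, rename_det_vandermonde, Perm.sign_swap (Fin.ne_of_val_ne (by omega))] at h
  push_cast at h
  exact mul_left_cancel₀ det_vandermonde_X_ne_zero (by linear_combination -h)

end Vandermonde

/-! ### Generalized Laplace expansion -/

abbrev KSubset (n k : ℕ) := {S : Finset (Fin n) // S.card = k}

def finSumSubEquiv {n k : ℕ} (h : k ≤ n) : Fin k ⊕ Fin (n - k) ≃ Fin n :=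
  finSumFinEquiv.trans (finCongr (Nat.add_sub_cancel' h))

namespace KSubset

variable {n k : ℕ}

theorem le (S : KSubset n k) : k ≤ n :=
  S.2 ▸ (Finset.card_le_univ _).trans_eq (Fintype.card_fin n)

def emb (S : KSubset n k) : Fin k ↪o Fin n := S.1.orderEmbOfFin S.2

def compl (S : KSubset n k) : KSubset n (n - k) :=
  ⟨S.1ᶜ, by rw [Finset.card_compl, S.2, Fintype.card_fin]⟩

def map (σ : Perm (Fin n)) (S : KSubset n k) : KSubset n k :=
  ⟨S.1.map σ.toEmbedding, by rw [Finset.card_map, S.2]⟩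

theorem emb_mem (S : KSubset n k) (p : Fin k) : S.emb p ∈ S.1 := Finset.orderEmbOfFin_mem _ _ _

theorem range_emb (S : KSubset n k) : Set.range S.emb = S.1 := Finset.range_orderEmbOfFin _ _

theorem compl_map (σ : Perm (Fin n)) (S : KSubset n k) : (S.map σ).compl = S.compl.map σ :=
  Subtype.ext <| by ext; simp [compl, map]

def sumEquiv (S : KSubset n k) : Fin k ⊕ Fin (n - k) ≃ Fin n :=
  (sumCongr (S.1.orderIsoOfFin S.2).toEquiv ((S.compl.1.orderIsoOfFin S.compl.2).toEquiv.trans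
    (subtypeEquivRight fun _ => Finset.mem_compl))).trans (sumCompl (· ∈ S.1))

@[simp] theorem sumEquiv_inl (S : KSubset n k) (p : Fin k) : S.sumEquiv (.inl p) = S.emb p := by
  simp [sumEquiv, emb]

@[simp] theorem sumEquiv_inr (S : KSubset n k) (q : Fin (n - k)) :
    S.sumEquiv (.inr q) = S.compl.emb q := by
  simp only [sumEquiv, trans_apply, sumCongr_apply, Sum.map_inr, sumCompl_apply_inr]
  exact Finset.coe_orderIsoOfFin_apply _ _ _

def perm (S : KSubset n k) : Perm (Fin n) := (finSumSubEquiv S.le).symm.trans S.sumEquiv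

def sign (S : KSubset n k) : ℤˣ := Perm.sign S.perm

def transfer (T S : KSubset n k) (τ₁ : Perm (Fin k)) (τ₂ : Perm (Fin (n - k))) : Perm (Fin n) :=
  T.sumEquiv.symm.trans ((sumCongr τ₁ τ₂).trans S.sumEquiv)

variable {T S : KSubset n k} {τ₁ : Perm (Fin k)} {τ₂ : Perm (Fin (n - k))}

@[simp] theorem sumEquiv_symm_emb (p : Fin k) : T.sumEquiv.symm (T.emb p) = .inl p := by
  rw [symm_apply_eq, sumEquiv_inl]

@[simp] theorem sumEquiv_symm_compl_emb (q : Fin (n - k)) :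
    T.sumEquiv.symm (T.compl.emb q) = .inr q := by
  rw [symm_apply_eq, sumEquiv_inr]

@[simp] theorem transfer_emb (p : Fin k) : transfer T S τ₁ τ₂ (T.emb p) = S.emb (τ₁ p) := by
  simp [transfer]

@[simp] theorem transfer_compl_emb (q : Fin (n - k)) :
    transfer T S τ₁ τ₂ (T.compl.emb q) = S.compl.emb (τ₂ q) := by
  simp [transfer]

theorem sign_transfer :
    Perm.sign (transfer T S τ₁ τ₂) = S.sign * (Perm.sign τ₁ * Perm.sign τ₂) * T.sign := by
  have h : transfer T S τ₁ τ₂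
      = S.perm * (finSumSubEquiv T.le).permCongr (sumCongr τ₁ τ₂) * T.perm⁻¹ := by
    ext x
    simp [transfer, perm, permCongr_apply, Perm.inv_def]
  rw [h, Perm.sign_mul, Perm.sign_mul, Perm.sign_inv, Perm.sign_permCongr, Perm.sign_sumCongr,
    sign, sign]

theorem transfer_injective (T : KSubset n k) :
    Function.Injective fun x : KSubset n k × Perm (Fin k) × Perm (Fin (n - k)) =>
      transfer T x.1 x.2.1 x.2.2 := by
  rintro ⟨S, τ₁, τ₂⟩ ⟨S', τ₁', τ₂'⟩ h
  have h₁ (p : Fin k) : S.emb (τ₁ p) = S'.emb (τ₁' p) := by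
    simpa using DFunLike.congr_fun h (T.emb p)
  have h₂ (q : Fin (n - k)) : S.compl.emb (τ₂ q) = S'.compl.emb (τ₂' q) := by
    simpa using DFunLike.congr_fun h (T.compl.emb q)
  obtain rfl : S = S' := Subtype.ext <| Finset.coe_injective <| by
    rw [← range_emb, ← range_emb, ← EquivLike.range_comp S.emb τ₁,
      ← EquivLike.range_comp S'.emb τ₁']
    exact congrArg Set.range (funext h₁)
  obtain rfl : τ₁ = τ₁' := Equiv.ext fun p => S.emb.injective (h₁ p)
  obtain rfl : τ₂ = τ₂' := Equiv.ext fun q => S.compl.emb.injective (h₂ q)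
  rfl

def transferEquiv (T : KSubset n k) :
    KSubset n k × Perm (Fin k) × Perm (Fin (n - k)) ≃ Perm (Fin n) :=
  Equiv.ofBijective _ <| (Fintype.bijective_iff_injective_and_card _).mpr ⟨transfer_injective T, by
    simp only [Fintype.card_prod, Fintype.card_perm, Fintype.card_finset_len, Fintype.card_fin]
    rw [← mul_assoc, Nat.choose_mul_factorial_mul_factorial T.le]⟩

end KSubset

open KSubset

section Laplace

variable {R : Type*} [CommRing R] {n k : ℕ}

/-- Laplace expansion along the set of columns `T`. -/
theorem sum_sign_mul_det_mul_det_compl (M : Matrix (Fin n) (Fin n) R) (T : KSubset n k) :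
    ∑ S : KSubset n k, ((S.sign : ℤ) : R) *
      ((M.submatrix S.emb T.emb).det * (M.submatrix S.compl.emb T.compl.emb).det)
      = (T.sign : ℤ) * M.det := by
  have h : M.det = ∑ S : KSubset n k, ((S.sign : ℤ) : R) * (T.sign : ℤ) *
      ((M.submatrix S.emb T.emb).det * (M.submatrix S.compl.emb T.compl.emb).det) := by
    rw [det_apply', ← (transferEquiv T).sum_comp, Fintype.sum_prod_type]
    refine Finset.sum_congr rfl fun S _ => ?_
    rw [det_apply', det_apply', Finset.sum_mul_sum, Fintype.sum_prod_type, Finset.mul_sum]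
    refine Finset.sum_congr rfl fun τ₁ _ => ?_
    rw [Finset.mul_sum]
    refine Finset.sum_congr rfl fun τ₂ _ => ?_
    rw [← T.sumEquiv.prod_comp, Fintype.prod_sum_type]
    simp only [transferEquiv, ofBijective_apply, sign_transfer, sumEquiv_inl, sumEquiv_inr,
      transfer_emb, transfer_compl_emb, submatrix_apply]
    push_cast
    ring
  rw [h, Finset.mul_sum]
  refine Finset.sum_congr rfl fun S _ => ?_
  linear_combination -(S.sign * ((M.submatrix S.emb T.emb).det *
    (M.submatrix S.compl.emb T.compl.emb).det) : R) * Int.cast_units_mul_self (R := R) T.sign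

end Laplace

section Compound

variable {R : Type*} [CommRing R] {n k : ℕ}

theorem KSubset.exists_mem_not_mem_of_ne {T T' : KSubset n k} (h : T ≠ T') :
    ∃ a ∈ T'.1, a ∉ T.1 :=
  Finset.not_subset.mp fun hsub =>
    h (Subtype.ext (Finset.eq_of_subset_of_card_le hsub (by rw [T.2, T'.2]))).symm

/-- The expansion of a matrix whose columns at `T` are those of `M` and whose columns at `Tᶜ` are
those of `M` at `T'ᶜ`; it has two equal columns. -/
theorem sum_sign_mul_det_mul_det_compl_of_ne (M : Matrix (Fin n) (Fin n) R) {T T' : KSubset n k}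
    (h : T ≠ T') : ∑ S : KSubset n k, ((S.sign : ℤ) : R) *
      ((M.submatrix S.emb T.emb).det * (M.submatrix S.compl.emb T'.compl.emb).det) = 0 := by
  let g : Fin n → Fin n := Sum.elim T.emb T'.compl.emb ∘ T.sumEquiv.symm
  have hg : ¬ Function.Surjective g := fun hg => by
    obtain ⟨a, haT', haT⟩ := KSubset.exists_mem_not_mem_of_ne h
    obtain ⟨x, hx⟩ := hg a
    obtain ⟨y | y, rfl⟩ := T.sumEquiv.surjective x
    · exact haT (by simpa [g, ← hx] using T.emb_mem y)
    · simp only [g, Function.comp_apply, symm_apply_apply, Sum.elim_inr] at hx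
      exact Finset.mem_compl.mp (hx ▸ T'.compl.emb_mem y) haT'
  obtain ⟨i, j, hij, hne⟩ := Function.not_injective_iff.mp (mt Finite.surjective_of_injective hg)
  have hdet : (M.submatrix id g).det = 0 := det_zero_of_column_eq hne fun r => by simp [hij]
  have hT : g ∘ T.emb = T.emb := funext fun p => by simp [g]
  have hT' : g ∘ T.compl.emb = T'.compl.emb := funext fun q => by simp [g]
  simpa [submatrix_submatrix, hT, hT', hdet] using
    sum_sign_mul_det_mul_det_compl (M.submatrix id g) T

def compound (M : Matrix (Fin n) (Fin n) R) (k : ℕ) : Matrix (KSubset n k) (KSubset n k) R :=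
  of fun T S => (M.submatrix T.emb S.emb).det

def adjCompound (M : Matrix (Fin n) (Fin n) R) (k : ℕ) : Matrix (KSubset n k) (KSubset n k) R :=
  of fun S T => ((S.sign : ℤ) : R) * (T.sign : ℤ) * (M.submatrix T.compl.emb S.compl.emb).det

theorem compound_mul_adjCompound (M : Matrix (Fin n) (Fin n) R) (k : ℕ) :
    compound M k * adjCompound M k = M.det • 1 := by
  ext T T'
  have h : (compound M k * adjCompound M k) T T' = (T'.sign : ℤ) * ∑ S : KSubset n k,
      ((S.sign : ℤ) : R) * ((Mᵀ.submatrix S.emb T.emb).det *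
        (Mᵀ.submatrix S.compl.emb T'.compl.emb).det) := by
    rw [mul_apply, Finset.mul_sum]
    refine Finset.sum_congr rfl fun S _ => ?_
    simp only [compound, adjCompound, of_apply, ← transpose_submatrix, det_transpose]
    ring
  rw [h, Matrix.smul_apply, one_apply, smul_eq_mul]
  split_ifs with hTT'
  · rw [hTT', sum_sign_mul_det_mul_det_compl, det_transpose, ← mul_assoc,
      Int.cast_units_mul_self, one_mul, mul_one]
  · rw [sum_sign_mul_det_mul_det_compl_of_ne _ hTT', mul_zero, mul_zero]

theorem det_compound_ne_zero [IsDomain R] {M : Matrix (Fin n) (Fin n) R} (hM : M.det ≠ 0)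
    (k : ℕ) : (compound M k).det ≠ 0 := by
  have h := congrArg det (compound_mul_adjCompound M k)
  rw [det_mul, det_smul, det_one, mul_one] at h
  exact left_ne_zero_of_mul (h ▸ pow_ne_zero _ hM)

end Compound

/-! ### Adjacent transpositions acting on subsets -/

/-- The sign picked up by the graded flip `P^{(i,j)}` on `v_I` when `I` has entries `2`
exactly at the positions in `U`. -/
def swapSign {n : ℕ} (i j : Fin n) (U : Finset (Fin n)) : ℤˣ :=
  if i ∈ U ∧ j ∈ U then -1 else 1

namespace KSubset

variable {n k : ℕ} {i j : Fin n}

theorem map_swap_map_swap (U : KSubset n k) : (U.map (swap i j)).map (swap i j) = U :=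
  Subtype.ext <| by ext; simp [map]

theorem map_swap_eq_self {U : KSubset n k} (h : i ∈ U.1 ↔ j ∈ U.1) : U.map (swap i j) = U :=
  Subtype.ext <| by
    ext x
    simp only [map, Finset.mem_map_equiv, symm_swap, swap_apply_def]
    split_ifs with h₁ h₂ <;> simp_all

theorem swapSign_map_swap (U : KSubset n k) :
    swapSign i j (U.map (swap i j)).1 = swapSign i j U.1 := by
  simp [swapSign, map, Finset.mem_map_equiv, and_comm]

theorem exists_perm_swap_comp_emb (hij : (j : ℕ) = i + 1) (U : KSubset n k) :
    ∃ π : Perm (Fin k), Perm.sign π = swapSign i j U.1 ∧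
      swap i j ∘ U.emb = (U.map (swap i j)).emb ∘ π := by
  by_cases hU : i ∈ U.1 ∧ j ∈ U.1
  · obtain ⟨p, rfl⟩ : i ∈ Set.range U.emb := by rw [range_emb]; exact hU.1
    obtain ⟨q, rfl⟩ : j ∈ Set.range U.emb := by rw [range_emb]; exact hU.2
    have hpq : p ≠ q := by rintro rfl; omega
    refine ⟨swap p q, by rw [Perm.sign_swap hpq, swapSign, if_pos hU], ?_⟩
    rw [map_swap_eq_self (iff_of_true hU.1 hU.2)]
    exact funext fun x => U.emb.injective.swap_apply p q x
  · refine ⟨1, by rw [Perm.sign_one, swapSign, if_neg hU], ?_⟩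
    rw [Perm.coe_one, Function.comp_id]
    refine Finset.orderEmbOfFin_unique _ (fun x => ?_) fun a b hab => ?_
    · simpa [map, Finset.mem_map_equiv] using U.emb_mem x
    · exact Fin.swap_lt_swap_of_adjacent hij (U.emb.strictMono hab)
        fun ⟨ha, hb⟩ => hU ⟨ha ▸ U.emb_mem a, hb ▸ U.emb_mem b⟩

theorem sign_mul_swapSign_mul_swapSign (hij : (j : ℕ) = i + 1) (T : KSubset n k) :
    T.sign * swapSign i j T.1 * swapSign i j T.compl.1 = -(T.map (swap i j)).sign := by
  obtain ⟨π₁, hπ₁, h₁⟩ := exists_perm_swap_comp_emb hij T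
  obtain ⟨π₂, hπ₂, h₂⟩ := exists_perm_swap_comp_emb hij T.compl
  rw [← compl_map] at h₂
  have h : swap i j * T.perm
      = (T.map (swap i j)).perm * (finSumSubEquiv T.le).permCongr (sumCongr π₁ π₂) := by
    refine Equiv.ext fun x => ?_
    obtain ⟨y | y, rfl⟩ := (finSumSubEquiv T.le).surjective x
    · simpa [perm, permCongr_apply] using congrFun h₁ y
    · simpa [perm, permCongr_apply] using congrFun h₂ y
  have hs := congrArg Perm.sign h
  rw [Perm.sign_mul, Perm.sign_mul, Perm.sign_swap (Fin.ne_of_val_ne (by omega)),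
    Perm.sign_permCongr, Perm.sign_sumCongr, hπ₁, hπ₂] at hs
  calc T.sign * swapSign i j T.1 * swapSign i j T.compl.1
      = -(-1 * Perm.sign T.perm * (swapSign i j T.1 * swapSign i j T.compl.1)) := by
        rw [neg_one_mul, neg_mul, neg_neg, mul_assoc, sign]
    _ = -(T.map (swap i j)).sign := by
        rw [hs, mul_assoc, Int.units_mul_self, mul_one, sign]

end KSubset

theorem rename_swap_det_submatrix_vandermonde {R : Type*} [CommRing R] {n k : ℕ} {i j : Fin n}
    (hij : (j : ℕ) = i + 1) (U : KSubset n k) (c : Fin k → Fin n) :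
    rename (swap i j) ((vandermonde (X : Fin n → MvPolynomial (Fin n) R)).submatrix U.emb c).det
      = ((swapSign i j U.1 : ℤ) : MvPolynomial (Fin n) R) *
        ((vandermonde X).submatrix (U.map (swap i j)).emb c).det := by
  obtain ⟨π, hπ, h⟩ := KSubset.exists_perm_swap_comp_emb hij U
  rw [rename_det_submatrix_vandermonde, h, ← hπ, ← det_permute]
  rfl

/-! ### Invariants of the standard action -/

section Coordinates

variable {n : ℕ}

def supp (J : Fin n → Fin 2) : Finset (Fin n) := Finset.univ.filter fun s => J s = 1

def ind (T : Finset (Fin n)) : Fin n → Fin 2 := fun s => if s ∈ T then 1 else 0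

@[simp] theorem supp_ind (T : Finset (Fin n)) : supp (ind T) = T := by
  ext s
  simp [supp, ind]

@[simp] theorem ind_supp (J : Fin n → Fin 2) : ind (supp J) = J := by
  funext s
  simp only [ind, supp, Finset.mem_filter, Finset.mem_univ, true_and]
  split_ifs with h
  · exact h.symm
  · omega

theorem cnt_ind (T : Finset (Fin n)) : cnt (ind T) = T.card :=
  congrArg Finset.card (supp_ind T)

theorem ind_comp_swap (T : Finset (Fin n)) (i j : Fin n) :
    ind T ∘ swap i j = ind (T.map (swap i j).toEmbedding) := by
  funext s
  simp [ind, Finset.mem_map_equiv]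

theorem epsV_ind (i j : Fin n) (T : Finset (Fin n)) :
    epsV i j (ind T) = ((swapSign i j T : ℤ) : MvP n) := by
  simp only [epsV, ind, swapSign]
  split_ifs <;> simp_all

theorem stdInv_iff {f : Vsp n} : stdInv n f ↔ ∀ i j : Fin n, (j : ℕ) = i + 1 →
    ∀ T : Finset (Fin n), f (ind T)
      = (swapSign i j T : ℤ) * rename (swap i j) (f (ind (T.map (swap i j).toEmbedding))) := by
  refine ⟨fun hf i j hij T => ?_, fun hf i j hij J => ?_⟩
  · rw [← epsV_ind, ← ind_comp_swap]
    exact hf i j hij (ind T)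
  · have h := hf i j hij (supp J)
    rwa [← epsV_ind, ← ind_comp_swap, ind_supp] at h

theorem rename_swap_apply_ind_of_stdInv {f : Vsp n} (hf : stdInv n f) {i j : Fin n}
    (hij : (j : ℕ) = i + 1) {k : ℕ} (T : KSubset n k) :
    rename (swap i j) (f (ind T.1)) = (swapSign i j T.1 : ℤ) * f (ind (T.map (swap i j)).1) := by
  have h := stdInv_iff.mp hf i j hij (T.map (swap i j)).1
  rw [show (T.map (swap i j)).1.map (swap i j).toEmbedding = T.1 from
    congrArg Subtype.val T.map_swap_map_swap, KSubset.swapSign_map_swap] at h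
  rw [h, ← mul_assoc, Int.cast_units_mul_self, one_mul]

end Coordinates

section MinorVec

variable {n ℓ : ℕ}

def minorVec (S : KSubset n ℓ) : Vsp n := fun J =>
  if h : (supp J).card = ℓ then compound (vandermonde (X : Fin n → MvP n)) ℓ ⟨supp J, h⟩ S else 0

theorem minorVec_apply_ind (S T : KSubset n ℓ) :
    minorVec S (ind T.1) = compound (vandermonde (X : Fin n → MvP n)) ℓ T S := by
  have h : (supp (ind T.1)).card = ℓ := by rw [supp_ind, T.2]
  rw [minorVec, dif_pos h, show (⟨supp (ind T.1), h⟩ : KSubset n ℓ) = T from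
    Subtype.ext (supp_ind _)]

theorem minorVec_apply_of_cnt_ne (S : KSubset n ℓ) {J : Fin n → Fin 2} (h : cnt J ≠ ℓ) :
    minorVec S J = 0 :=
  dif_neg h

theorem memWt_minorVec (S : KSubset n ℓ) : memWt n ℓ (minorVec S) :=
  fun _ h => minorVec_apply_of_cnt_ne S h

theorem stdInv_minorVec (S : KSubset n ℓ) : stdInv n (minorVec S) := by
  refine stdInv_iff.mpr fun i j hij T => ?_
  by_cases hT : T.card = ℓ
  · obtain ⟨T, rfl⟩ : ∃ T' : KSubset n ℓ, T'.1 = T := ⟨⟨T, hT⟩, rfl⟩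
    rw [show T.1.map (swap i j).toEmbedding = (T.map (swap i j)).1 from rfl,
      minorVec_apply_ind, minorVec_apply_ind]
    simp only [compound, of_apply]
    rw [rename_swap_det_submatrix_vandermonde hij, KSubset.map_swap_map_swap,
      KSubset.swapSign_map_swap, ← mul_assoc, Int.cast_units_mul_self, one_mul]
  · have hT' : (T.map (swap i j).toEmbedding).card ≠ ℓ := by rwa [Finset.card_map]
    rw [minorVec_apply_of_cnt_ne S (by rwa [cnt_ind]),
      minorVec_apply_of_cnt_ne S (by rwa [cnt_ind]), map_zero, mul_zero]

theorem sum_smul_minorVec_apply_ind (c : KSubset n ℓ → MvP n) (T : KSubset n ℓ) :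
    (∑ S, c S • minorVec S) (ind T.1) = (compound (vandermonde (X : Fin n → MvP n)) ℓ *ᵥ c) T := by
  simp [Finset.sum_apply, minorVec_apply_ind, mulVec, dotProduct, mul_comm]

end MinorVec

section WeightBasis

variable {n ℓ : ℕ}

theorem rename_swap_adjCompound_mulVec {f : Vsp n} (hf : stdInv n f) {i j : Fin n}
    (hij : (j : ℕ) = i + 1) (S : KSubset n ℓ) :
    rename (swap i j) ((adjCompound (vandermonde (X : Fin n → MvP n)) ℓ *ᵥ fun T => f (ind T.1)) S)
      = -(adjCompound (vandermonde (X : Fin n → MvP n)) ℓ *ᵥ fun T => f (ind T.1)) S := by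
  simp only [mulVec, dotProduct, adjCompound, of_apply, map_sum]
  -- the term of `T` is sent to minus the term of `T.map (swap i j)`
  conv_rhs => rw [← Equiv.sum_comp (Function.Involutive.toPerm (KSubset.map (swap i j))
    fun T : KSubset n ℓ => T.map_swap_map_swap), ← Finset.sum_neg_distrib]
  refine Finset.sum_congr rfl fun T _ => ?_
  have hsign := congrArg (fun u : ℤˣ => ((u : ℤ) : MvP n))
    (KSubset.sign_mul_swapSign_mul_swapSign hij T)
  simp only [Units.val_mul, Units.val_neg, Int.cast_mul, Int.cast_neg] at hsign
  simp only [Function.Involutive.toPerm, coe_fn_mk, map_mul, map_intCast]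
  rw [rename_swap_det_submatrix_vandermonde hij, ← KSubset.compl_map,
    rename_swap_apply_ind_of_stdInv hf hij]
  linear_combination ((S.sign : ℤ) * ((vandermonde (X : Fin n → MvP n)).submatrix
    (T.map (swap i j)).compl.emb S.compl.emb).det * f (ind (T.map (swap i j)).1) : MvP n) *
    hsign

theorem exists_isSymmetric_compound_mulVec_eq {f : Vsp n} (hf : stdInv n f) :
    ∃ c : KSubset n ℓ → MvP n, (∀ S, (c S).IsSymmetric) ∧
      compound (vandermonde (X : Fin n → MvP n)) ℓ *ᵥ c = fun T => f (ind T.1) := by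
  choose c hc hmul using fun S : KSubset n ℓ => exists_isSymmetric_eq_mul_det_vandermonde
    fun i j hij => rename_swap_adjCompound_mulVec hf hij S
  refine ⟨c, hc, smul_right_injective (KSubset n ℓ → MvP n)
    (det_vandermonde_X_ne_zero (R := ℂ) (n := n)) ?_⟩
  have hsmul : (vandermonde (X : Fin n → MvP n)).det • c
      = adjCompound (vandermonde X) ℓ *ᵥ fun T => f (ind T.1) :=
    funext fun S => by rw [hmul S, Pi.smul_apply, smul_eq_mul, mul_comm]
  simp only [← mulVec_smul, hsmul, mulVec_mulVec, compound_mul_adjCompound, smul_mulVec,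
    one_mulVec]

theorem exists_eq_sum_smul_minorVec {f : Vsp n} (hf : stdInv n f) (hw : memWt n ℓ f) :
    ∃ c : KSubset n ℓ → MvP n, (∀ S, (c S).IsSymmetric) ∧ f = ∑ S, c S • minorVec S := by
  obtain ⟨c, hc, hcf⟩ := exists_isSymmetric_compound_mulVec_eq (ℓ := ℓ) hf
  refine ⟨c, hc, funext fun J => ?_⟩
  by_cases hJ : cnt J = ℓ
  · have hT : ind (⟨supp J, hJ⟩ : KSubset n ℓ).1 = J := ind_supp J
    rw [← hT, sum_smul_minorVec_apply_ind, hcf]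
  · simp [hw J hJ, Finset.sum_apply, minorVec_apply_of_cnt_ne _ hJ]

theorem eq_zero_of_sum_smul_minorVec_eq_zero {c : KSubset n ℓ → MvP n}
    (hc : ∑ S, c S • minorVec S = 0) : c = 0 :=
  eq_zero_of_mulVec_eq_zero (det_compound_ne_zero det_vandermonde_X_ne_zero ℓ)
    (funext fun T => by rw [← sum_smul_minorVec_apply_ind, hc, Pi.zero_apply, Pi.zero_apply])

end WeightBasis

section FreeModule

variable {n : ℕ}

def IsSymBasis {ι : Type*} [Fintype ι] (P : Vsp n → Prop) (w : ι → Vsp n) : Prop :=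
  (∀ a, P (w a)) ∧
    (∀ f, P f → ∃ c : ι → MvP n, (∀ a, (c a).IsSymmetric) ∧ f = ∑ a, c a • w a) ∧
    ∀ c : ι → MvP n, (∀ a, (c a).IsSymmetric) → ∑ a, c a • w a = 0 → ∀ a, c a = 0

theorem IsSymBasis.comp_equiv {ι κ : Type*} [Fintype ι] [Fintype κ] {P : Vsp n → Prop}
    {w : ι → Vsp n} (hw : IsSymBasis P w) (e : κ ≃ ι) : IsSymBasis P (w ∘ e) := by
  obtain ⟨hP, hspan, hind⟩ := hw
  refine ⟨fun a => hP (e a), fun f hf => ?_, fun c hc h a => ?_⟩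
  · obtain ⟨c, hc, rfl⟩ := hspan f hf
    exact ⟨c ∘ e, fun a => hc (e a), (e.sum_comp fun a => c a • w a).symm⟩
  · have h' : ∑ b, (c ∘ e.symm) b • w b = 0 := by
      rw [← h, ← e.sum_comp]
      simp
    simpa using hind (c ∘ e.symm) (fun b => hc (e.symm b)) h' (e a)

theorem isSymBasis_minorVec (ℓ : ℕ) :
    IsSymBasis (fun f => stdInv n f ∧ memWt n ℓ f) (minorVec (n := n) (ℓ := ℓ)) :=
  ⟨fun S => ⟨stdInv_minorVec S, memWt_minorVec S⟩,
    fun _ hf => exists_eq_sum_smul_minorVec hf.1 hf.2,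
    fun _ _ hc S => congrFun (eq_zero_of_sum_smul_minorVec_eq_zero hc) S⟩

theorem cnt_comp_swap (J : Fin n → Fin 2) (i j : Fin n) : cnt (J ∘ swap i j) = cnt J := by
  have h := congrArg cnt (ind_comp_swap (supp J) i j)
  rwa [ind_supp, cnt_ind, Finset.card_map] at h

def wtProj (k : ℕ) : Vsp n →ₗ[MvP n] Vsp n where
  toFun f J := if cnt J = k then f J else 0
  map_add' f g := funext fun J => by split_ifs <;> simp [*]
  map_smul' c f := funext fun J => by split_ifs <;> simp [*]

theorem wtProj_apply (k : ℕ) (f : Vsp n) (J : Fin n → Fin 2) :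
    wtProj k f J = if cnt J = k then f J else 0 :=
  rfl

theorem stdInv_wtProj {f : Vsp n} (hf : stdInv n f) (k : ℕ) : stdInv n (wtProj k f) := by
  intro i j hij J
  simp only [wtProj_apply, cnt_comp_swap]
  split_ifs
  · exact hf i j hij J
  · rw [map_zero, mul_zero]

theorem memWt_wtProj (k : ℕ) (f : Vsp n) : memWt n k (wtProj k f) :=
  fun _ hJ => if_neg hJ

theorem wtProj_eq_self {k : ℕ} {f : Vsp n} (hf : memWt n k f) : wtProj k f = f :=
  funext fun J => by
    rw [wtProj_apply]
    split_ifs with hJ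
    · rfl
    · exact (hf J hJ).symm

theorem wtProj_eq_zero {k k' : ℕ} {f : Vsp n} (hf : memWt n k f) (hk : k' ≠ k) :
    wtProj k' f = 0 :=
  funext fun J => by
    rw [wtProj_apply]
    split_ifs with hJ
    · exact hf J (hJ ▸ hk)
    · rfl

theorem sum_wtProj (f : Vsp n) : ∑ k : Fin (n + 1), wtProj k f = f := by
  funext J
  have hJ : cnt J < n + 1 := Nat.lt_succ_of_le ((Finset.card_le_univ _).trans_eq (by simp))
  rw [Finset.sum_apply, Finset.sum_eq_single ⟨cnt J, hJ⟩]
  · exact if_pos rfl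
  · exact fun k _ hk => if_neg fun h => hk (Fin.ext h.symm)
  · simp

theorem memWt_sum_smul_minorVec {ℓ : ℕ} (c : KSubset n ℓ → MvP n) :
    memWt n ℓ (∑ S, c S • minorVec S) :=
  fun J hJ => by simp [Finset.sum_apply, minorVec_apply_of_cnt_ne _ hJ]

theorem isSymBasis_sigma_minorVec :
    IsSymBasis (stdInv n) fun x : Σ k : Fin (n + 1), KSubset n k => minorVec x.2 := by
  refine ⟨fun x => stdInv_minorVec x.2, fun f hf => ?_, fun c _ h x => ?_⟩
  · choose c hc hsum using fun k : Fin (n + 1) =>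
      exists_eq_sum_smul_minorVec (stdInv_wtProj hf k) (memWt_wtProj k f)
    refine ⟨fun x => c x.1 x.2, fun x => hc x.1 x.2, ?_⟩
    rw [Fintype.sum_sigma]
    conv_lhs => rw [← sum_wtProj f]
    exact Finset.sum_congr rfl fun k _ => hsum k
  · obtain ⟨k, S⟩ := x
    have hk := congrArg (wtProj k) h
    rw [map_zero, Fintype.sum_sigma, map_sum, Finset.sum_eq_single k
      (fun k' _ hk' => wtProj_eq_zero (memWt_sum_smul_minorVec _) (Fin.val_ne_of_ne hk').symm)
      (by simp), wtProj_eq_self (memWt_sum_smul_minorVec _)] at hk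
    exact congrFun (eq_zero_of_sum_smul_minorVec_eq_zero hk) S

end FreeModule

theorem stmt5_general (n : ℕ) (ℓ : ℕ) :
    (∃ w : Fin (n.choose ℓ) → Vsp n,
      (∀ a, stdInv n (w a) ∧ memWt n ℓ (w a)) ∧
      (∀ f : Vsp n, stdInv n f → memWt n ℓ f →
        ∃ c : Fin (n.choose ℓ) → MvP n, (∀ a, (c a).IsSymmetric) ∧ f = ∑ a, c a • w a) ∧
      (∀ c : Fin (n.choose ℓ) → MvP n, (∀ a, (c a).IsSymmetric) →
        ∑ a, c a • w a = 0 → ∀ a, c a = 0)) ∧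
    (∃ w : Fin (2 ^ n) → Vsp n,
      (∀ a, stdInv n (w a)) ∧
      (∀ f : Vsp n, stdInv n f →
        ∃ c : Fin (2 ^ n) → MvP n, (∀ a, (c a).IsSymmetric) ∧ f = ∑ a, c a • w a) ∧
      (∀ c : Fin (2 ^ n) → MvP n, (∀ a, (c a).IsSymmetric) →
        ∑ a, c a • w a = 0 → ∀ a, c a = 0)) := by
  have hcard : Fintype.card (Fin (n.choose ℓ)) = Fintype.card (KSubset n ℓ) := by simp
  have hcard' : Fintype.card (Fin (2 ^ n)) = Fintype.card (Σ k : Fin (n + 1), KSubset n k) := by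
    simp [Fin.sum_univ_eq_sum_range (n.choose ·), Nat.sum_range_choose]
  obtain ⟨hw, hspan, hind⟩ := (isSymBasis_minorVec ℓ).comp_equiv (Fintype.equivOfCardEq hcard)
  exact ⟨⟨_, hw, fun f hf hwt => hspan f ⟨hf, hwt⟩, hind⟩,
    ⟨_, isSymBasis_sigma_minorVec.comp_equiv (Fintype.equivOfCardEq hcard')⟩⟩

/-- `(𝒱^S)_{(n−ℓ,ℓ)}` is a free `ℂ[z₁,…,z_n]^{S_n}`-module of rank `C(n,ℓ)`
(there is a family of `C(n,ℓ)` elements such that every element is a unique combination with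
symmetric-polynomial coefficients), and consequently `𝒱^S` is free of rank `2^n`. -/
theorem stmt5 (n : ℕ) (hn : 1 ≤ n) (ℓ : ℕ) (hℓ : ℓ ≤ n) :
    (∃ w : Fin (n.choose ℓ) → Vsp n,
      (∀ a, stdInv n (w a) ∧ memWt n ℓ (w a)) ∧
      (∀ f : Vsp n, stdInv n f → memWt n ℓ f →
        ∃ c : Fin (n.choose ℓ) → MvP n, (∀ a, (c a).IsSymmetric) ∧ f = ∑ a, c a • w a) ∧
      (∀ c : Fin (n.choose ℓ) → MvP n, (∀ a, (c a).IsSymmetric) →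
        ∑ a, c a • w a = 0 → ∀ a, c a = 0)) ∧
    (∃ w : Fin (2 ^ n) → Vsp n,
      (∀ a, stdInv n (w a)) ∧
      (∀ f : Vsp n, stdInv n f →
        ∃ c : Fin (2 ^ n) → MvP n, (∀ a, (c a).IsSymmetric) ∧ f = ∑ a, c a • w a) ∧
      (∀ c : Fin (2 ^ n) → MvP n, (∀ a, (c a).IsSymmetric) →
        ∑ a, c a • w a = 0 → ∀ a, c a = 0)) :=
  stmt5_general n ℓ

end
end

section
/- There exist unique Σ₁, …, Σ_{n−1} ∈ R satisfying n·f(x)·g(x) = ((x+1)^n + Σ_{i=1}^{n−1} (−1)^i Σ_i (x+1)^{n−i}) − (x^n + Σ_{i=1}^{n−1} (−1)^i Σ_i x^{n−i}) in R[x]; setting Σ_n = S and defining G₁, …, G_{n−1} ∈ R by n·f(x−1)·g(x) = n·x^{n−1} + Σ_{i=1}^{n−1} G_i x^{n−1−i}, the elements G₁, …, G_{n−1}, Σ₁, …, Σ_n generate R as a ℂ-algebra. -/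
set_option synthInstance.maxHeartbeats 1000000
set_option maxHeartbeats 1000000

noncomputable section

open Polynomial

/-- The polynomial ring `R = ℂ[f₁, …, f_l, g₁, …, g_{n−l−1}, S]` in `n` indeterminates. -/
abbrev Rring (n l : ℕ) := MvPolynomial (Fin l ⊕ Fin (n - l - 1) ⊕ Unit) ℂ

/-- `f(x) = x^l + Σ_{i=1}^l f_i x^{l−i} ∈ R[x]`. -/
def fpol (n l : ℕ) : Polynomial (Rring n l) :=
  X ^ l + ∑ i : Fin l, C (MvPolynomial.X (Sum.inl i)) * X ^ (l - 1 - (i : ℕ))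

/-- `g(x) = x^{n−l−1} + Σ_{i=1}^{n−l−1} g_i x^{n−l−1−i} ∈ R[x]`. -/
def gpol (n l : ℕ) : Polynomial (Rring n l) :=
  X ^ (n - l - 1) + ∑ i : Fin (n - l - 1), C (MvPolynomial.X (Sum.inr (Sum.inl i))) * X ^ (n - l - 2 - (i : ℕ))

/-- The last indeterminate `S` of `R`. -/
def Svar (n l : ℕ) : Rring n l := MvPolynomial.X (Sum.inr (Sum.inr ()))

/-- The defining identity for `Σ₁, …, Σ_{n−1} ∈ R`:
`n·f(x)·g(x) = ((x+1)^n + Σ_{i=1}^{n−1} (−1)^i Σ_i (x+1)^{n−i}) − (x^n + Σ_{i=1}^{n−1} (−1)^i Σ_i x^{n−i})`. -/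
def sigmaEq (n l : ℕ) (Sig : Fin (n - 1) → Rring n l) : Prop :=
  (n : Polynomial (Rring n l)) * fpol n l * gpol n l =
    ((X + 1) ^ n + ∑ i : Fin (n - 1), C ((-1 : Rring n l) ^ ((i : ℕ) + 1) * Sig i) * (X + 1) ^ (n - ((i : ℕ) + 1)))
    - (X ^ n + ∑ i : Fin (n - 1), C ((-1 : Rring n l) ^ ((i : ℕ) + 1) * Sig i) * X ^ (n - ((i : ℕ) + 1)))

/-- `G₁, …, G_{n−1} ∈ R` defined by `n·f(x−1)·g(x) = n·x^{n−1} + Σ_{i=1}^{n−1} G_i x^{n−1−i}`,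
i.e. `G_i` is the coefficient of `x^{n−1−i}` in `n·f(x−1)·g(x)`. -/
def Gelem (n l : ℕ) (i : Fin (n - 1)) : Rring n l :=
  ((n : Polynomial (Rring n l)) * (fpol n l).comp (X - 1) * gpol n l).coeff (n - 1 - ((i : ℕ) + 1))

/-!
Put `P(x) = x^n + Σ_{i=1}^{n-1} (-1)^i Σ_i x^{n-i}`; the defining identity says
`P(x+1) - P(x) = n f(x) g(x)`. The polynomials `(x+1)^m - x^m` have degree `m - 1` and leading
coefficient `m`, a unit, so they form a triangular basis and the `Σ_i` exist and are unique.

Let `A` be the subalgebra generated by the `G_i`, `Σ_i` and `S`. The `Σ_i` put every coefficient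
of `f g` into `A`, the `G_i` every coefficient of `f(x-1) g`. Read `f` and `g` from the top
through the reversed polynomials `φ = x^l f(1/x)` and `ψ = x^{n-l-1} g(1/x)`, and let `φ̃` be the
reversal of `f(x-1)`: then `φ - φ̃ = l x + O(x^2)`, and its coefficient of `x^{j+1}` is
`(l - j) φ_j` plus a combination of lower coefficients of `φ`. Once all coefficients of index
`< j` lie in `A`, the coefficient of `x^j` in `φ ψ` gives `φ_j + ψ_j` and that of `x^{j+1}` in
`(φ - φ̃) ψ` gives `l ψ_j + (l - j) φ_j`, modulo `A`. This system has determinant `j`, so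
induction on `j` puts every coefficient of `f` and `g`, in particular every variable `f_i`, `g_i`,
into `A`.
-/
namespace Polynomial

section MonicOfCoeffs

variable {R : Type*} [CommRing R]

def monicOfCoeffs (d : ℕ) (a : Fin d → R) : R[X] :=
  X ^ d + ∑ i : Fin d, C (a i) * X ^ (d - 1 - (i : ℕ))

variable {d : ℕ} (a : Fin d → R)

lemma degree_sum_C_mul_X_pow_sub_lt :
    (∑ i : Fin d, C (a i) * X ^ (d - 1 - (i : ℕ))).degree < (d : WithBot ℕ) := by
  refine (degree_lt_iff_coeff_zero _ _).2 fun m hm => ?_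
  rw [finsetSum_coeff]
  refine Finset.sum_eq_zero fun i _ => ?_
  rw [coeff_C_mul_X_pow, if_neg (by omega)]

lemma monicOfCoeffs_monic : (monicOfCoeffs d a).Monic :=
  monic_X_pow_add (degree_sum_C_mul_X_pow_sub_lt a)

lemma natDegree_monicOfCoeffs [Nontrivial R] : (monicOfCoeffs d a).natDegree = d := by
  rw [monicOfCoeffs, natDegree_add_eq_left_of_degree_lt, natDegree_X_pow]
  rw [degree_X_pow]
  exact degree_sum_C_mul_X_pow_sub_lt a

lemma coeff_monicOfCoeffs (i : Fin d) : (monicOfCoeffs d a).coeff (d - 1 - i) = a i := by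
  rw [monicOfCoeffs, coeff_add, coeff_X_pow, if_neg (by omega), zero_add, finsetSum_coeff,
    Finset.sum_eq_single i]
  · rw [coeff_C_mul_X_pow, if_pos rfl]
  · intro j _ hj
    rw [coeff_C_mul_X_pow, if_neg (fun h => hj (Fin.ext (by omega)))]
  · simp

end MonicOfCoeffs

section ForwardDifference

variable {R : Type*} [CommRing R]

lemma coeff_X_add_one_pow_sub_X_pow_of_le {m k : ℕ} (h : m ≤ k) :
    ((X + 1) ^ m - X ^ m : R[X]).coeff k = 0 := by
  rw [coeff_sub, coeff_X_add_one_pow, coeff_X_pow]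
  rcases h.eq_or_lt with rfl | h
  · simp
  · simp [Nat.choose_eq_zero_of_lt h, h.ne']

lemma coeff_X_add_one_pow_succ_sub_X_pow_succ (m : ℕ) :
    ((X + 1) ^ (m + 1) - X ^ (m + 1) : R[X]).coeff m = m + 1 := by
  rw [coeff_sub, coeff_X_add_one_pow, coeff_X_pow, if_neg m.succ_ne_self.symm,
    Nat.choose_succ_self_right]
  push_cast
  ring

lemma coeff_sum_C_mul_X_add_one_pow_sub_X_pow {N : ℕ} (c : Fin (N + 1) → R) :
    (∑ i, C (c i) * ((X + 1) ^ (N + 1 - i) - X ^ (N + 1 - i))).coeff N = c 0 * (N + 1) := by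
  rw [finsetSum_coeff, Fin.sum_univ_succ, Finset.sum_eq_zero fun i _ => ?_, add_zero]
  · simp only [Fin.val_zero, Nat.sub_zero, coeff_C_mul, coeff_X_add_one_pow_succ_sub_X_pow_succ]
  · rw [coeff_C_mul, coeff_X_add_one_pow_sub_X_pow_of_le (by simp), mul_zero]

theorem existsUnique_sum_C_mul_X_add_one_pow_sub_X_pow
    (hR : ∀ m : ℕ, IsUnit ((m + 1 : ℕ) : R)) {N : ℕ} {q : R[X]} (hq : q.degree < N) :
    ∃! c : Fin N → R, ∑ i, C (c i) * ((X + 1) ^ (N - i) - X ^ (N - i)) = q := by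
  induction N generalizing q with
  | zero =>
    have hq0 : q = 0 := by
      ext k
      exact (degree_lt_iff_coeff_zero q 0).1 (by exact_mod_cast hq) k k.zero_le
    exact ⟨Fin.elim0, by simp [hq0], fun _ _ => Subsingleton.elim _ _⟩
  | succ N ih =>
    obtain ⟨u, hu⟩ := hR N
    push_cast at hu
    have hsum (c : Fin (N + 1) → R) :
        ∑ i, C (c i) * ((X + 1) ^ (N + 1 - i) - X ^ (N + 1 - i)) =
          C (c 0) * ((X + 1) ^ (N + 1) - X ^ (N + 1)) +
            ∑ i : Fin N, C (c i.succ) * ((X + 1) ^ (N - i) - X ^ (N - i)) := by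
      simp [Fin.sum_univ_succ]
    set a := q.coeff N * ↑u⁻¹
    have hlow : (q - C a * ((X + 1) ^ (N + 1) - X ^ (N + 1))).degree < (N : WithBot ℕ) := by
      refine (degree_lt_iff_coeff_zero _ _).2 fun k hk => ?_
      rw [coeff_sub, coeff_C_mul]
      rcases hk.eq_or_lt with rfl | hk
      · rw [coeff_X_add_one_pow_succ_sub_X_pow_succ, ← hu, Units.inv_mul_cancel_right, sub_self]
      · rw [(degree_lt_iff_coeff_zero _ _).1 hq k hk, coeff_X_add_one_pow_sub_X_pow_of_le hk,
          mul_zero, sub_zero]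
    obtain ⟨c, hc, huniq⟩ := ih hlow
    refine ⟨Fin.cons a c, ?_, fun c' hc' => ?_⟩
    · change _ = q
      rw [hsum, Fin.cons_zero]
      simp only [Fin.cons_succ, hc]
      ring
    · have h0 : c' 0 = a := by
        rw [← Units.mul_inv_cancel_right (c' 0) u, hu,
          ← coeff_sum_C_mul_X_add_one_pow_sub_X_pow, hc']
      have htail : Fin.tail c' = c := huniq _ (by
        rw [← hc', hsum, h0]
        simp [Fin.tail])
      rw [← Fin.cons_self_tail c', h0, htail]

lemma degree_natCast_mul_sub_X_add_one_pow_sub_X_pow_lt {h : R[X]} (hh : h.Monic) {n : ℕ}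
    (hn : h.natDegree + 1 = n) :
    ((n : R[X]) * h - ((X + 1) ^ n - X ^ n)).degree < (h.natDegree : WithBot ℕ) := by
  refine (degree_lt_iff_coeff_zero _ _).2 fun k hk => ?_
  subst hn
  rw [coeff_sub, coeff_natCast_mul]
  rcases hk.eq_or_lt with rfl | hk
  · rw [coeff_X_add_one_pow_succ_sub_X_pow_succ, hh.coeff_natDegree]
    push_cast
    ring
  · rw [coeff_eq_zero_of_natDegree_lt hk, coeff_X_add_one_pow_sub_X_pow_of_le hk, mul_zero,
      sub_zero]

end ForwardDifference

section Reverse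

variable {R : Type*} [CommRing R]

lemma coeff_reverse_taylor (p : R[X]) (r : R) (s : ℕ) :
    (taylor r p).reverse.coeff s = ∑ t ∈ Finset.range (s + 1),
      ((p.natDegree - t).choose (s - t) : R) * r ^ (s - t) * p.reverse.coeff t := by
  rw [coeff_reverse, natDegree_taylor]
  rcases le_or_gt s p.natDegree with hs | hs
  · have hdeg : (hasseDeriv (p.natDegree - s) p).natDegree < s + 1 :=
      (natDegree_hasseDeriv_le p _).trans_lt (by omega)
    rw [revAt_le hs, taylor_coeff, eval_eq_sum_range' hdeg, ← Finset.sum_range_reflect]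
    refine Finset.sum_congr rfl fun t ht => ?_
    have ht : t ≤ s := Nat.lt_succ_iff.1 (Finset.mem_range.1 ht)
    rw [hasseDeriv_coeff, coeff_reverse, revAt_le (ht.trans hs), add_tsub_cancel_right,
      show s - t + (p.natDegree - s) = p.natDegree - t by omega,
      Nat.choose_symm_of_eq_add (show p.natDegree - t = (p.natDegree - s) + (s - t) by omega)]
    ring
  · rw [revAt_eq_self_of_lt hs, coeff_eq_zero_of_natDegree_lt (by rwa [natDegree_taylor])]
    refine (Finset.sum_eq_zero fun t _ => ?_).symm
    rcases le_or_gt t p.natDegree with ht | ht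
    · rw [Nat.choose_eq_zero_of_lt (by omega), Nat.cast_zero, zero_mul, zero_mul]
    · rw [coeff_reverse, revAt_eq_self_of_lt ht, coeff_eq_zero_of_natDegree_lt ht, mul_zero]

lemma coeff_reverse_sub_reverse_taylor (p : R[X]) (r : R) (s : ℕ) :
    (p.reverse - (taylor r p).reverse).coeff s = -∑ t ∈ Finset.range s,
      ((p.natDegree - t).choose (s - t) : R) * r ^ (s - t) * p.reverse.coeff t := by
  rw [coeff_sub, coeff_reverse_taylor, Finset.sum_range_succ]
  simp

lemma coeff_zero_reverse_sub_reverse_taylor (p : R[X]) (r : R) :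
    (p.reverse - (taylor r p).reverse).coeff 0 = 0 := by
  rw [coeff_reverse_sub_reverse_taylor, Finset.sum_range_zero, neg_zero]

lemma coeff_one_reverse_sub_reverse_taylor (p : R[X]) (r : R) :
    (p.reverse - (taylor r p).reverse).coeff 1 = -(p.natDegree * r * p.leadingCoeff) := by
  rw [coeff_reverse_sub_reverse_taylor, Finset.sum_range_one, coeff_zero_reverse]
  simp

section Subring

variable {S : Type*} [SetLike S R] [SubringClass S R] (A : S) {p : R[X]} {r : R}

lemma sum_choose_mul_pow_mul_coeff_reverse_mem (hr : r ∈ A) {m : ℕ}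
    (hp : ∀ t < m, p.reverse.coeff t ∈ A) (s : ℕ) :
    ∑ t ∈ Finset.range m,
      ((p.natDegree - t).choose (s - t) : R) * r ^ (s - t) * p.reverse.coeff t ∈ A :=
  sum_mem fun t ht => mul_mem (mul_mem (natCast_mem A _) (pow_mem hr _))
    (hp t (Finset.mem_range.1 ht))

lemma coeff_reverse_sub_reverse_taylor_mem (hr : r ∈ A) {s : ℕ}
    (hp : ∀ t < s, p.reverse.coeff t ∈ A) :
    (p.reverse - (taylor r p).reverse).coeff s ∈ A := by
  rw [coeff_reverse_sub_reverse_taylor]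
  exact neg_mem (sum_choose_mul_pow_mul_coeff_reverse_mem A hr hp s)

lemma coeff_succ_reverse_sub_reverse_taylor_add_mem (hr : r ∈ A) {j : ℕ}
    (hp : ∀ t < j, p.reverse.coeff t ∈ A) :
    (p.reverse - (taylor r p).reverse).coeff (j + 1) +
      ((p.natDegree : R) - j) * r * p.reverse.coeff j ∈ A := by
  have hlead : ((p.natDegree - j).choose (j + 1 - j) : R) * r ^ (j + 1 - j) * p.reverse.coeff j =
      ((p.natDegree : R) - j) * r * p.reverse.coeff j := by
    rcases le_or_gt j p.natDegree with h | h
    · simp [Nat.cast_sub h]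
    · simp [coeff_reverse, revAt_eq_self_of_lt h, coeff_eq_zero_of_natDegree_lt h]
  rw [coeff_reverse_sub_reverse_taylor, Finset.sum_range_succ, hlead, neg_add,
    neg_add_cancel_right]
  exact neg_mem (sum_choose_mul_pow_mul_coeff_reverse_mem A hr hp _)

lemma coeff_mul_sub_add_mem_of_forall_ne (p q : R[X]) {k a b : ℕ} (hab : a ≠ b) (ha : a ≤ k)
    (hb : b ≤ k) (h : ∀ i ≤ k, i ≠ a → i ≠ b → p.coeff i * q.coeff (k - i) ∈ A) :
    (p * q).coeff k - (p.coeff a * q.coeff (k - a) + p.coeff b * q.coeff (k - b)) ∈ A := by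
  have hsub : ({a, b} : Finset ℕ) ⊆ Finset.range (k + 1) := by
    simp only [Finset.insert_subset_iff, Finset.singleton_subset_iff, Finset.mem_range]
    omega
  rw [coeff_mul, Finset.Nat.sum_antidiagonal_eq_sum_range_succ_mk, ← Finset.sum_sdiff hsub,
    Finset.sum_pair hab, add_sub_cancel_right]
  refine sum_mem fun i hi => ?_
  simp only [Finset.mem_sdiff, Finset.mem_range, Finset.mem_insert, Finset.mem_singleton,
    not_or] at hi
  exact h i (by omega) hi.2.1 hi.2.2

end Subring

end Reverse

end Polynomial

section CharZeroAlgebra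

variable {K R : Type*} [Field K] [CommRing R] [Algebra K R]

lemma isUnit_natCast_of_algebra {m : ℕ} (hm : (m : K) ≠ 0) : IsUnit (m : R) := by
  rw [← map_natCast (algebraMap K R)]
  exact (IsUnit.mk0 _ hm).map _

lemma mem_of_natCast_mul_mem (A : Subalgebra K R) {m : ℕ} (hm : (m : K) ≠ 0) {x : R}
    (h : (m : R) * x ∈ A) : x ∈ A := by
  have := A.smul_mem h (m : K)⁻¹
  rwa [Algebra.smul_def, ← mul_assoc, ← map_natCast (algebraMap K R), ← map_mul,
    inv_mul_cancel₀ hm, map_one, one_mul] at this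

end CharZeroAlgebra

namespace Polynomial

variable {K R : Type*} [Field K] [CharZero K] [CommRing R] [Algebra K R] (A : Subalgebra K R)

theorem coeff_reverse_mem_of_coeff_mul_mem_of_coeff_taylor_mul_mem {f g : R[X]} (hf : f.Monic)
    (hg : g.Monic) (hfg : ∀ i, (f * g).coeff i ∈ A)
    (hfg' : ∀ i, (taylor (-1) f * g).coeff i ∈ A) (j : ℕ) :
    f.reverse.coeff j ∈ A ∧ g.reverse.coeff j ∈ A := by
  nontriviality R
  set φ := f.reverse
  set ψ := g.reverse
  set δ := f.reverse - (taylor (-1) f).reverse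
  have hlc : f.leadingCoeff * g.leadingCoeff ≠ 0 := by simp [hf.leadingCoeff, hg.leadingCoeff]
  have hlc' : (taylor (-1) f).leadingCoeff * g.leadingCoeff ≠ 0 := by rwa [leadingCoeff_taylor]
  have hφψ (k : ℕ) : (φ * ψ).coeff k ∈ A := by
    rw [← reverse_mul hlc, coeff_reverse]
    exact hfg _
  have hδψ (k : ℕ) : (δ * ψ).coeff k ∈ A := by
    rw [sub_mul, ← reverse_mul hlc, ← reverse_mul hlc', coeff_sub, coeff_reverse, coeff_reverse]
    exact sub_mem (hfg _) (hfg' _)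
  have hφ0 : φ.coeff 0 = 1 := by rw [coeff_zero_reverse, hf.leadingCoeff]
  have hψ0 : ψ.coeff 0 = 1 := by rw [coeff_zero_reverse, hg.leadingCoeff]
  have hδ1 : δ.coeff 1 = f.natDegree := by
    rw [coeff_one_reverse_sub_reverse_taylor, hf.leadingCoeff]
    ring
  have hm1 : (-1 : R) ∈ A := neg_mem (one_mem A)
  induction j using Nat.strong_induction_on with
  | _ j ih =>
  rcases Nat.eq_zero_or_pos j with rfl | hj
  · rw [hφ0, hψ0]
    exact ⟨one_mem A, one_mem A⟩
  have hφlt (s : ℕ) (hs : s ≤ j) : ∀ t < s, φ.coeff t ∈ A := fun t ht => (ih t (by omega)).1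
  have hφψj : φ.coeff j + ψ.coeff j ∈ A := by
    have h := coeff_mul_sub_add_mem_of_forall_ne A φ ψ hj.ne' le_rfl (Nat.zero_le j)
      fun i hi hij hi0 => mul_mem (ih i (by omega)).1 (ih _ (by omega)).2
    rw [Nat.sub_self, Nat.sub_zero, hφ0, hψ0, mul_one, one_mul] at h
    simpa using sub_mem (hφψ j) h
  have hδψj : (f.natDegree : R) * ψ.coeff j + ((f.natDegree : R) - j) * φ.coeff j ∈ A := by
    have h := coeff_mul_sub_add_mem_of_forall_ne A δ ψ (k := j + 1) (a := 1) (by omega) (by omega)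
      le_rfl fun i hi hi1 hij => by
        rcases Nat.eq_zero_or_pos i with rfl | hi0
        · rw [coeff_zero_reverse_sub_reverse_taylor, zero_mul]
          exact zero_mem A
        · exact mul_mem (coeff_reverse_sub_reverse_taylor_mem A hm1 (hφlt i (by omega)))
            (ih _ (by omega)).2
    rw [hδ1, Nat.add_sub_cancel, Nat.sub_self, hψ0, mul_one] at h
    have hδj := coeff_succ_reverse_sub_reverse_taylor_add_mem A hm1 (hφlt j le_rfl)
    convert sub_mem (hδψ (j + 1)) (add_mem h hδj) using 1
    ring
  -- the two relations form a linear system in `φ_j, ψ_j` of determinant `j`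
  have hψj : ψ.coeff j ∈ A := by
    refine mem_of_natCast_mul_mem A (Nat.cast_ne_zero.2 hj.ne') ?_
    have hlj : (f.natDegree : R) - j ∈ A := sub_mem (natCast_mem A _) (natCast_mem A _)
    convert sub_mem hδψj (mul_mem hlj hφψj) using 1
    ring
  exact ⟨by simpa using sub_mem hφψj hψj, hψj⟩

theorem coeff_mem_of_coeff_mul_mem_of_coeff_comp_mul_mem {f g : R[X]} (hf : f.Monic)
    (hg : g.Monic) (hfg : ∀ i, (f * g).coeff i ∈ A)
    (hfg' : ∀ i, (f.comp (X - 1) * g).coeff i ∈ A) (i : ℕ) :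
    f.coeff i ∈ A ∧ g.coeff i ∈ A := by
  have hcomp : f.comp (X - 1) = taylor (-1) f := by
    rw [taylor_apply, C_neg, C_1, sub_eq_add_neg]
  have h := coeff_reverse_mem_of_coeff_mul_mem_of_coeff_taylor_mul_mem A hf hg hfg (hcomp ▸ hfg')
  constructor
  · simpa only [coeff_reverse, revAt_invol] using (h (revAt f.natDegree i)).1
  · simpa only [coeff_reverse, revAt_invol] using (h (revAt g.natDegree i)).2

end Polynomial

open Polynomial

lemma fpol_eq (n l : ℕ) : fpol n l = monicOfCoeffs l fun i => MvPolynomial.X (Sum.inl i) := rfl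

lemma gpol_eq (n l : ℕ) :
    gpol n l = monicOfCoeffs (n - l - 1) fun i => MvPolynomial.X (Sum.inr (Sum.inl i)) := rfl

lemma fpol_monic (n l : ℕ) : (fpol n l).Monic := monicOfCoeffs_monic _

lemma gpol_monic (n l : ℕ) : (gpol n l).Monic := monicOfCoeffs_monic _

lemma natDegree_fpol_mul_gpol {n l : ℕ} (hl : l ≤ n - 1) :
    (fpol n l * gpol n l).natDegree = n - 1 := by
  rw [(fpol_monic n l).natDegree_mul (gpol_monic n l), fpol_eq, gpol_eq, natDegree_monicOfCoeffs,
    natDegree_monicOfCoeffs]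
  omega

section SignTwist

variable {R : Type*} [CommRing R] {N : ℕ}

def signTwist (c : Fin N → R) (i : Fin N) : R :=
  (-1) ^ ((i : ℕ) + 1) * c i

lemma signTwist_involutive : Function.Involutive (signTwist (R := R) (N := N)) := fun c => by
  ext i
  rw [signTwist, signTwist, ← mul_assoc, ← mul_pow, neg_one_mul, neg_neg, one_pow, one_mul]

end SignTwist

lemma sigmaEq_iff {n l : ℕ} (Sig : Fin (n - 1) → Rring n l) :
    sigmaEq n l Sig ↔
      ∑ i, C (signTwist Sig i) * ((X + 1) ^ (n - 1 - i) - X ^ (n - 1 - i)) =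
        (n : (Rring n l)[X]) * (fpol n l * gpol n l) - ((X + 1) ^ n - X ^ n) := by
  simp only [sigmaEq, signTwist, Nat.sub_sub, add_comm 1, mul_sub, Finset.sum_sub_distrib]
  constructor <;> intro h <;> linear_combination -h

theorem existsUnique_sigmaEq {n l : ℕ} (hn : n ≠ 0) (hl : l ≤ n - 1) :
    ∃! Sig : Fin (n - 1) → Rring n l, sigmaEq n l Sig := by
  have hdeg := degree_natCast_mul_sub_X_add_one_pow_sub_X_pow_lt
    ((fpol_monic n l).mul (gpol_monic n l)) (n := n) (by rw [natDegree_fpol_mul_gpol hl]; omega)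
  rw [natDegree_fpol_mul_gpol hl] at hdeg
  have := existsUnique_sum_C_mul_X_add_one_pow_sub_X_pow
    (fun m => isUnit_natCast_of_algebra (K := ℂ) (Nat.cast_ne_zero.2 m.succ_ne_zero)) hdeg
  rw [← (signTwist_involutive.toPerm _).existsUnique_congr_right] at this
  simpa only [sigmaEq_iff, Function.Involutive.coe_toPerm] using this

lemma coeff_fpol_mul_gpol_mem {n l : ℕ} (hn : n ≠ 0) (A : Subalgebra ℂ (Rring n l))
    {Sig : Fin (n - 1) → Rring n l} (hSig : sigmaEq n l Sig) (hA : ∀ i, Sig i ∈ A) (k : ℕ) :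
    (fpol n l * gpol n l).coeff k ∈ A := by
  refine mem_of_natCast_mul_mem A (Nat.cast_ne_zero.2 hn) ?_
  rw [← coeff_natCast_mul, ← mul_assoc, hSig]
  simp only [coeff_sub, coeff_add, finsetSum_coeff, coeff_C_mul, coeff_X_add_one_pow, coeff_X_pow]
  have hite (P : Prop) [Decidable P] : (if P then (1 : Rring n l) else 0) ∈ A := by
    split_ifs
    exacts [one_mem A, zero_mem A]
  refine sub_mem (add_mem ?_ (sum_mem fun i _ => ?_)) (add_mem ?_ (sum_mem fun i _ => ?_)) <;>
    apply_rules [mul_mem, natCast_mem, pow_mem, neg_mem, one_mem]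

lemma coeff_fpol_comp_mul_gpol_mem {n l : ℕ} (hl : l ≤ n - 1) (A : Subalgebra ℂ (Rring n l))
    (hA : ∀ i, Gelem n l i ∈ A) (k : ℕ) :
    ((fpol n l).comp (X - 1) * gpol n l).coeff k ∈ A := by
  have hfX : ((fpol n l).comp (X - 1)).Monic := by
    rw [← C_1]
    exact (fpol_monic n l).comp_X_sub_C 1
  have hmonic := hfX.mul (gpol_monic n l)
  have hdeg : ((fpol n l).comp (X - 1) * gpol n l).natDegree = n - 1 := by
    rw [← natDegree_fpol_mul_gpol hl, hfX.natDegree_mul (gpol_monic n l),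
      (fpol_monic n l).natDegree_mul (gpol_monic n l), natDegree_comp, ← C_1, natDegree_X_sub_C,
      mul_one]
  rcases lt_trichotomy k (n - 1) with hk | rfl | hk
  · refine mem_of_natCast_mul_mem A (Nat.cast_ne_zero.2 (by omega : n ≠ 0)) ?_
    have h := hA ⟨n - 2 - k, by omega⟩
    rwa [Gelem, mul_assoc, coeff_natCast_mul, show n - 1 - (n - 2 - k + 1) = k by omega] at h
  · rw [← hdeg, hmonic.coeff_natDegree]
    exact one_mem A
  · rw [coeff_eq_zero_of_natDegree_lt (hdeg ▸ hk)]
    exact zero_mem A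

/-- there exist unique `Σ₁, …, Σ_{n−1} ∈ R` satisfying the identity
`n·f(x)·g(x) = ((x+1)^n + Σ (−1)^i Σ_i (x+1)^{n−i}) − (x^n + Σ (−1)^i Σ_i x^{n−i})`, and,
setting `Σ_n = S` and defining `G₁, …, G_{n−1}` by
`n·f(x−1)·g(x) = n·x^{n−1} + Σ G_i x^{n−1−i}`, the elements
`G₁, …, G_{n−1}, Σ₁, …, Σ_n` generate `R` as a ℂ-algebra. -/
theorem stmt12 (n l : ℕ) (hn : 2 ≤ n) (hl : l ≤ n - 1) :
    (∃! Sig : Fin (n - 1) → Rring n l, sigmaEq n l Sig) ∧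
    (∀ Sig : Fin (n - 1) → Rring n l, sigmaEq n l Sig →
      Algebra.adjoin ℂ
        ((Set.range fun i : Fin (n - 1) => Gelem n l i) ∪ Set.range Sig ∪ {Svar n l}) = ⊤) := by
  refine ⟨existsUnique_sigmaEq (by omega) hl, fun Sig hSig => ?_⟩
  set A := Algebra.adjoin ℂ
    ((Set.range fun i : Fin (n - 1) => Gelem n l i) ∪ Set.range Sig ∪ {Svar n l})
  have hG (i : Fin (n - 1)) : Gelem n l i ∈ A := Algebra.subset_adjoin (by simp)
  have hSigA (i : Fin (n - 1)) : Sig i ∈ A := Algebra.subset_adjoin (by simp)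
  have hS : Svar n l ∈ A := Algebra.subset_adjoin (by simp)
  have hcoeff := coeff_mem_of_coeff_mul_mem_of_coeff_comp_mul_mem A (fpol_monic n l)
    (gpol_monic n l) (coeff_fpol_mul_gpol_mem (by omega) A hSig hSigA)
    (coeff_fpol_comp_mul_gpol_mem hl A hG)
  rw [eq_top_iff, ← MvPolynomial.adjoin_range_X, Algebra.adjoin_le_iff]
  rintro _ ⟨i | j | ⟨⟩, rfl⟩
  · simpa only [fpol_eq, coeff_monicOfCoeffs, SetLike.mem_coe] using (hcoeff (l - 1 - i)).1
  · simpa only [gpol_eq, coeff_monicOfCoeffs, SetLike.mem_coe] using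
      (hcoeff (n - l - 1 - 1 - j)).2
  · exact hS

end
end
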